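/- arXiv:0710.2748 — 9 statements merged into one kernel-verified Lean document; each statement's English description precedes it below -/
import Mathlib

section
/- Let p_0,…,p_m ∈ K[X], not all zero, and let P = Σ_{j=0}^m p_j(M) D_q^j. Then the set {d ∈ ℤ : β_d is not identically zero} is nonempty and finite; writing d_max and d_min for its maximum and minimum, and N_max = #{k ∈ ℤ : β_{d_max}(k) = 0}, N_min = #{k ∈ ℤ : β_{d_min}(k) = 0}, one has d_max − d_min ≤ dim_K ker P ≤ d_max − d_min + min(N_max, N_min) ≤ d_max − d_min + m. -/
open Polynomial
open scoped Classical

noncomputable section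

/-- The q-integer {n}_q. -/
def qInt (K : Type*) [Field K] (q : K) (n : ℤ) : K :=
  if q = 1 then (n : K) else (q ^ n - 1) / (q - 1)

/-- The multiplication operator `M` on formal Laurent series `L = ℤ → K`:
`(M a)(n) = a(n-1)`. -/
def Mop (K : Type*) [Field K] : Module.End K (ℤ → K) where
  toFun a := fun n => a (n - 1)
  map_add' _ _ := rfl
  map_smul' _ _ := rfl

/-- The q-difference operator `D_q` on `L = ℤ → K`: `(D_q a)(n) = {n+1}_q · a(n+1)`. -/
def Dq (K : Type*) [Field K] (q : K) : Module.End K (ℤ → K) where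
  toFun a := fun n => qInt K q (n + 1) * a (n + 1)
  map_add' x y := by funext n; simp [Pi.add_apply, mul_add]
  map_smul' c x := by funext n; simp [Pi.smul_apply, smul_eq_mul]; ring

/-- The coefficient `p_{j,j+d}` of `X^{j+d}` in `p_j` (zero when `j + d < 0`). -/
def pCoeff (K : Type*) [Field K] (p : ℕ → K[X]) (j : ℕ) (d : ℤ) : K :=
  if (j : ℤ) + d < 0 then 0 else (p j).coeff ((j + d).toNat)

/-- `β_d(k) = Σ_{j=0}^m p_{j,j+d} · {k}_q {k−1}_q ⋯ {k−j+1}_q`, describing the action of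
the homogeneous degree-`d` part of `P = Σ_{j=0}^m p_j(M) D_q^j` on `t^k`. -/
def beta (K : Type*) [Field K] (q : K) (m : ℕ) (p : ℕ → K[X]) (d k : ℤ) : K :=
  ∑ j ∈ Finset.range (m + 1),
    pCoeff K p j d * ∏ i ∈ Finset.range j, qInt K q (k - (i : ℤ))

set_option synthInstance.maxHeartbeats 1000000
set_option maxHeartbeats 1600000

namespace RecAux

variable {K : Type*} [Field K]

/-- The value of the `n`-th recurrence constraint. -/
def Csum (r : ℕ) (γ : ℕ → ℤ → K) (a : ℤ → K) (n : ℤ) : K :=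
  ∑ e ∈ Finset.range (r + 1), γ e n * a (n - (e : ℤ))

lemma Csum_add (r : ℕ) (γ : ℕ → ℤ → K) (a b : ℤ → K) (n : ℤ) :
    Csum r γ (a + b) n = Csum r γ a n + Csum r γ b n := by
  simp [Csum, mul_add, Finset.sum_add_distrib]

lemma Csum_smul (r : ℕ) (γ : ℕ → ℤ → K) (c : K) (a : ℤ → K) (n : ℤ) :
    Csum r γ (c • a) n = c * Csum r γ a n := by
  simp only [Csum, Pi.smul_apply, smul_eq_mul, Finset.mul_sum]
  exact Finset.sum_congr rfl (fun x _ => by ring)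

/-- Solutions of the full recurrence. -/
def solSpace (r : ℕ) (γ : ℕ → ℤ → K) : Submodule K (ℤ → K) where
  carrier := {a | ∀ n, Csum r γ a n = 0}
  add_mem' := by intro a b ha hb n; rw [Csum_add, ha n, hb n, add_zero]
  zero_mem' := by intro n; simp [Csum]
  smul_mem' := by intro c a ha n; rw [Csum_smul, ha n, mul_zero]

/-- Solutions of the non-degenerate constraints only. -/
def solSpace' (r : ℕ) (γ : ℕ → ℤ → K) : Submodule K (ℤ → K) where
  carrier := {a | ∀ n, γ r n ≠ 0 → Csum r γ a n = 0}
  add_mem' := by intro a b ha hb n hn; rw [Csum_add, ha n hn, hb n hn, add_zero]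
  zero_mem' := by intro n _; simp [Csum]
  smul_mem' := by intro c a ha n hn; rw [Csum_smul, ha n hn, mul_zero]

variable (r : ℕ) (γ : ℕ → ℤ → K) (n0 : ℤ)

/-- The two-sided recursive extension of initial data `v`. -/
def Ext (v : ℤ → K) (n : ℤ) : K :=
  if h1 : n0 < n then
    - (γ 0 n)⁻¹ * ∑ e ∈ (Finset.range r).attach,
        γ (e.1 + 1) n * Ext v (n - ((e.1 : ℤ) + 1))
  else if h2 : n ≤ n0 - r then
    if γ r (n + r) = 0 then v n
    else - (γ r (n + r))⁻¹ * ∑ e ∈ (Finset.range r).attach,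
        γ e.1 (n + r) * Ext v (n + r - (e.1 : ℤ))
  else v n
termination_by ((n - n0).toNat + (n0 - r + 1 - n).toNat)
decreasing_by
  · have := e.2; rw [Finset.mem_range] at this; omega
  · have := e.2; rw [Finset.mem_range] at this; omega


variable (T' : Finset ℤ)

/-- The window together with the degenerate positions. -/
def Om : Finset ℤ := Finset.Icc (n0 - r + 1) n0 ∪ T'

/-- Restriction of a solution to `Om`. -/
def restr : solSpace' r γ →ₗ[K] ({x // x ∈ Om r n0 T'} → K) where
  toFun a := fun x => a.1 x.1
  map_add' a b := rfl
  map_smul' c a := rfl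

/-- Defect map. -/
def defect : solSpace' r γ →ₗ[K] ({x // x ∈ T'} → K) where
  toFun a := fun t => Csum r γ a.1 (t.1 + r)
  map_add' a b := by funext t; exact Csum_add r γ a.1 b.1 (t.1 + r)
  map_smul' c a := by funext t; exact Csum_smul r γ c a.1 (t.1 + r)


lemma Ext_of_gt (v : ℤ → K) (n : ℤ) (h : n0 < n) :
    Ext r γ n0 v n = -((γ 0 n)⁻¹ * ∑ e ∈ Finset.range r,
      γ (e + 1) n * Ext r γ n0 v (n - ((e : ℤ) + 1))) := by
  rw [Ext, dif_pos h, Finset.sum_attach (Finset.range r)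
    (fun x => γ (x + 1) n * Ext r γ n0 v (n - ((x : ℤ) + 1))), neg_mul]

lemma Ext_of_le (v : ℤ → K) (m n : ℤ) (hmn : m + r = n) (h2 : m ≤ n0 - r)
    (h3 : γ r n ≠ 0) :
    Ext r γ n0 v m = -((γ r n)⁻¹ * ∑ e ∈ Finset.range r,
      γ e n * Ext r γ n0 v (n - (e : ℤ))) := by
  rw [Ext, dif_neg (by omega), dif_pos h2, if_neg (by rwa [hmn]),
    Finset.sum_attach (Finset.range r)
      (fun x => γ x (m + r) * Ext r γ n0 v (m + r - (x : ℤ))), hmn, neg_mul]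

lemma Ext_of_T (v : ℤ → K) (n : ℤ) (h2 : n ≤ n0 - r) (h3 : γ r (n + r) = 0) :
    Ext r γ n0 v n = v n := by
  rw [Ext, dif_neg (by omega), dif_pos h2, if_pos h3]

lemma Ext_of_win (v : ℤ → K) (n : ℤ) (hw1 : n0 - r < n) (hw2 : n ≤ n0) :
    Ext r γ n0 v n = v n := by
  rw [Ext, dif_neg (by omega), dif_neg (by omega)]

section Hyps

variable (hmem : ∀ t : ℤ, γ r (t + r) = 0 ↔ t ∈ T')
variable (hT : ∀ t ∈ T', t ≤ n0 - r)
variable (h0 : ∀ n, n0 < n → γ 0 n ≠ 0)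

include hmem hT in
lemma hrn : ∀ n : ℤ, n0 < n → γ r n ≠ 0 := by
  intro n hn h
  have h' : γ r ((n - r) + r) = 0 := by rw [sub_add_cancel]; exact h
  have := hT _ ((hmem (n - r)).mp h')
  omega

include hmem hT h0 in
lemma restr_injective : Function.Injective (restr r γ n0 T') := by
  rw [injective_iff_map_eq_zero]
  rintro ⟨a, ha⟩ hres
  have hz : ∀ x ∈ Om r n0 T', a x = 0 := by
    intro x hx
    have := congrFun hres ⟨x, hx⟩
    simpa [restr] using this
  have hwin : ∀ n : ℤ, n0 - r < n → n ≤ n0 → a n = 0 := by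
    intro n h1 h2
    exact hz n (Finset.mem_union_left _ (Finset.mem_Icc.mpr ⟨by omega, h2⟩))
  have hTz : ∀ t : ℤ, γ r (t + r) = 0 → a t = 0 := by
    intro t ht
    exact hz t (Finset.mem_union_right _ ((hmem t).mp ht))
  have up : ∀ N : ℕ, ∀ n : ℤ, n0 - r < n → n ≤ n0 + N → a n = 0 := by
    intro N
    induction N with
    | zero => exact fun n h1 h2 => hwin n h1 (by omega)
    | succ N ih =>
      intro n h1 h2
      rcases le_or_gt n (n0 + N) with h | h
      · exact ih n h1 h
      · have hn : n0 < n := by omega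
        have hC := ha n (hrn r γ n0 T' hmem hT n hn)
        rw [Csum, Finset.sum_range_succ'] at hC
        have hz' : ∀ e ∈ Finset.range r, γ (e + 1) n * a (n - ((e : ℕ) + 1 : ℕ)) = 0 := by
          intro e he
          rw [Finset.mem_range] at he
          have : a (n - ((e : ℕ) + 1 : ℕ)) = 0 := by
            apply ih _ (by push_cast; omega) (by push_cast; omega)
          rw [this, mul_zero]
        rw [Finset.sum_eq_zero hz'] at hC
        simp only [Nat.cast_zero, sub_zero, zero_add] at hC
        exact (mul_eq_zero.mp hC).resolve_left (h0 n hn)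
  have upAll : ∀ n : ℤ, n0 - r < n → a n = 0 := fun n h =>
    up (n - n0).toNat n h (by omega)
  have down_step : ∀ n : ℤ, n ≤ n0 - r →
      (∀ x : ℤ, n < x → x ≤ n0 - r → a x = 0) → a n = 0 := by
    intro n hn habove
    by_cases hg : γ r (n + r) = 0
    · exact hTz n hg
    · have hC := ha (n + r) hg
      rw [Csum, Finset.sum_range_succ] at hC
      have h1 : ∀ e ∈ Finset.range r, γ e (n + r) * a (n + r - e) = 0 := by
        intro e he
        rw [Finset.mem_range] at he
        have hx : a (n + (r : ℤ) - e) = 0 := by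
          rcases le_or_gt (n + (r : ℤ) - e) (n0 - r) with h | h
          · exact habove _ (by omega) h
          · exact upAll _ (by omega)
        rw [hx, mul_zero]
      rw [Finset.sum_eq_zero h1, zero_add] at hC
      have hnn : n + (r : ℤ) - r = n := by ring
      rw [hnn] at hC
      exact (mul_eq_zero.mp hC).resolve_left hg
  have down : ∀ N : ℕ, ∀ n : ℤ, n0 - r - N ≤ n → n ≤ n0 - r → a n = 0 := by
    intro N
    induction N with
    | zero =>
      intro n h1 h2
      exact down_step n h2 (fun x hx1 hx2 => absurd hx2 (by omega))
    | succ N ih =>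
      intro n h1 h2
      rcases le_or_gt (n0 - r - N) n with h | h
      · exact ih n h h2
      · exact down_step n h2 (fun x hx1 hx2 => ih x (by omega) hx2)
  apply Subtype.ext
  funext n
  show a n = 0
  rcases le_or_gt n (n0 - r) with h | h
  · exact down (n0 - r - n).toNat n (by omega) h
  · exact upAll n h


include h0 in
lemma Ext_mem (v : ℤ → K) : Ext r γ n0 v ∈ solSpace' r γ := by
  intro n hn
  rcases lt_or_ge n0 n with h | h
  · rw [Csum, Finset.sum_range_succ']
    push_cast
    simp only [sub_zero]
    rw [Ext_of_gt r γ n0 v n h, mul_neg, ← mul_assoc, mul_inv_cancel₀ (h0 n h), one_mul]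
    exact add_neg_cancel _
  · rw [Csum, Finset.sum_range_succ]
    rw [Ext_of_le r γ n0 v (n - r) n (by ring) (by omega) hn]
    rw [mul_neg, ← mul_assoc, mul_inv_cancel₀ hn, one_mul]
    exact add_neg_cancel _

include hmem hT h0 in
lemma restr_surjective : Function.Surjective (restr r γ n0 T') := by
  intro v
  set w : ℤ → K := fun n => if h : n ∈ Om r n0 T' then v ⟨n, h⟩ else 0 with hw
  refine ⟨⟨Ext r γ n0 w, Ext_mem r γ n0 h0 w⟩, ?_⟩
  funext x
  obtain ⟨x, hx⟩ := x
  show Ext r γ n0 w x = v ⟨x, hx⟩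
  have hwx : w x = v ⟨x, hx⟩ := by rw [hw]; exact dif_pos hx
  rcases Finset.mem_union.mp hx with h | h
  · rw [Finset.mem_Icc] at h
    rw [Ext_of_win r γ n0 w x (by omega) h.2, hwx]
  · have hle : x ≤ n0 - r := hT x h
    have hzero : γ r (x + r) = 0 := (hmem x).mpr h
    rw [Ext_of_T r γ n0 w x hle hzero, hwx]


include hmem hT h0 in
theorem main_rec :
    FiniteDimensional K (solSpace r γ) ∧
    r ≤ Module.finrank K (solSpace r γ) ∧
    Module.finrank K (solSpace r γ) ≤ r + T'.card := by
  classical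
  have hbij : Function.Bijective (restr r γ n0 T') :=
    ⟨restr_injective r γ n0 T' hmem hT h0, restr_surjective r γ n0 T' hmem hT h0⟩
  let E : solSpace' r γ ≃ₗ[K] ({x // x ∈ Om r n0 T'} → K) :=
    LinearEquiv.ofBijective _ hbij
  have hfd' : FiniteDimensional K (solSpace' r γ) := Module.Finite.equiv E.symm
  have hcard : (Om r n0 T').card = r + T'.card := by
    rw [Om, Finset.card_union_of_disjoint]
    · rw [Int.card_Icc]
      congr 1
      omega
    · rw [Finset.disjoint_left]
      intro x hx hx'
      rw [Finset.mem_Icc] at hx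
      have := hT x hx'
      omega
  have hrank' : Module.finrank K (solSpace' r γ) = r + T'.card := by
    rw [E.finrank_eq, Module.finrank_pi, Fintype.card_coe, hcard]
  let F : solSpace r γ →ₗ[K] LinearMap.ker (defect r γ T') :=
    { toFun := fun a => ⟨⟨a.1, fun n _ => a.2 n⟩, by
        rw [LinearMap.mem_ker]
        funext t
        exact a.2 (t.1 + r)⟩
      map_add' := fun a b => rfl
      map_smul' := fun c a => rfl }
  have hF : Function.Bijective F := by
    constructor
    · intro a b hab
      exact Subtype.ext (congrArg (fun x => x.1.1) hab)
    · rintro ⟨⟨a, ha'⟩, hker⟩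
      have hmemsol : a ∈ solSpace r γ := by
        intro n
        by_cases hg : γ r n = 0
        · have ht : (n - r) ∈ T' := (hmem (n - r)).mp (by rw [sub_add_cancel]; exact hg)
          have h1 : Csum r γ a ((n - r) + r) = 0 :=
            congrFun (LinearMap.mem_ker.mp hker) ⟨n - r, ht⟩
          rwa [sub_add_cancel] at h1
        · exact ha' n hg
      refine ⟨⟨a, hmemsol⟩, ?_⟩
      apply Subtype.ext
      apply Subtype.ext
      rfl
  let G : solSpace r γ ≃ₗ[K] LinearMap.ker (defect r γ T') := LinearEquiv.ofBijective F hF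
  have hfd : FiniteDimensional K (solSpace r γ) := Module.Finite.equiv G.symm
  refine ⟨hfd, ?_, ?_⟩
  · have h1 := LinearMap.finrank_range_add_finrank_ker (defect r γ T')
    have h2 : Module.finrank K (LinearMap.range (defect r γ T')) ≤ T'.card := by
      have := Submodule.finrank_le (LinearMap.range (defect r γ T'))
      rwa [Module.finrank_pi, Fintype.card_coe] at this
    have h3 : Module.finrank K (solSpace r γ) =
        Module.finrank K (LinearMap.ker (defect r γ T')) := G.finrank_eq
    omega
  · have h3 : Module.finrank K (solSpace r γ) =
        Module.finrank K (LinearMap.ker (defect r γ T')) := G.finrank_eq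
    have h4 := Submodule.finrank_le (LinearMap.ker (defect r γ T'))
    omega

end Hyps

end RecAux

namespace BetaAux

variable {K : Type*} [Field K] (q : K)

def phi : ℤ → K := fun k => if q = 1 then (k : K) else q ^ k

variable {q}

lemma qInt_one (h : q = 1) (n : ℤ) : qInt K q n = (n : K) := by simp [qInt, h]

lemma qInt_ne (h : q ≠ 1) (n : ℤ) : qInt K q n = (q ^ n - 1) / (q - 1) := by
  simp [qInt, h]

lemma phi_injective (hq : q ≠ 0) (hqi : ∀ n : ℤ, n ≠ 0 → qInt K q n ≠ 0) :
    Function.Injective (phi q : ℤ → K) := by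
  intro a b hab
  by_contra hne
  by_cases h1 : q = 1
  · have h2 : qInt K q (a - b) ≠ 0 := hqi _ (by omega)
    rw [qInt_one h1] at h2
    simp only [phi, h1, if_true] at hab
    apply h2
    push_cast
    rw [hab]
    ring
  · have h2 : qInt K q (a - b) ≠ 0 := hqi _ (by omega)
    rw [qInt_ne h1] at h2
    simp only [phi, h1, if_false] at hab
    apply h2
    rw [zpow_sub₀ hq, hab, div_self (zpow_ne_zero b hq)]
    simp

variable (q) in
def Acoef (i : ℕ) : K := if q = 1 then 1 else q ^ (-(i : ℤ)) / (q - 1)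

variable (q) in
def Bcoef (i : ℕ) : K := if q = 1 then -(i : K) else -(1 / (q - 1))

variable (q) in
def linp (i : ℕ) : K[X] := C (Acoef q i) * X + C (Bcoef q i)

lemma Acoef_ne_zero (hq : q ≠ 0) (i : ℕ) : Acoef q i ≠ 0 := by
  by_cases h1 : q = 1
  · simp [Acoef, h1]
  · simp only [Acoef, if_neg h1]
    exact div_ne_zero (zpow_ne_zero _ hq) (sub_ne_zero.mpr h1)

lemma linp_eval (hq : q ≠ 0) (i : ℕ) (k : ℤ) :
    (linp q i).eval (phi q k) = qInt K q (k - (i : ℤ)) := by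
  by_cases h1 : q = 1
  · simp only [linp, Acoef, Bcoef, phi, if_pos h1, qInt_one h1]
    simp only [eval_add, eval_mul, eval_C, eval_X, if_true, one_mul]
    push_cast
    ring
  · simp only [linp, Acoef, Bcoef, phi, if_neg h1, qInt_ne h1]
    simp only [eval_add, eval_mul, eval_C, eval_X]
    rw [div_mul_eq_mul_div, ← zpow_add₀ hq]
    have : -(i : ℤ) + k = k - i := by ring
    rw [this, ← sub_eq_add_neg, div_sub_div_same]

lemma linp_natDegree (hq : q ≠ 0) (i : ℕ) : (linp q i).natDegree = 1 :=
  natDegree_linear (Acoef_ne_zero hq i)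

lemma linp_leadingCoeff (hq : q ≠ 0) (i : ℕ) : (linp q i).leadingCoeff = Acoef q i :=
  leadingCoeff_linear (Acoef_ne_zero hq i)

lemma linp_ne_zero (hq : q ≠ 0) (i : ℕ) : linp q i ≠ 0 := by
  intro h
  have := linp_leadingCoeff (q := q) hq i
  rw [h, leadingCoeff_zero] at this
  exact Acoef_ne_zero hq i this.symm

variable (q) in
def Qprod (j : ℕ) : K[X] := ∏ i ∈ Finset.range j, linp q i

lemma Qprod_natDegree (hq : q ≠ 0) (j : ℕ) : (Qprod q j : K[X]).natDegree = j := by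
  rw [Qprod, natDegree_prod _ _ (fun i _ => linp_ne_zero hq i)]
  simp [linp_natDegree hq]

lemma Qprod_ne_zero (hq : q ≠ 0) (j : ℕ) : (Qprod q j : K[X]) ≠ 0 :=
  Finset.prod_ne_zero_iff.mpr (fun i _ => linp_ne_zero hq i)

lemma Qprod_leadingCoeff_ne_zero (hq : q ≠ 0) (j : ℕ) :
    (Qprod q j : K[X]).leadingCoeff ≠ 0 :=
  leadingCoeff_ne_zero.mpr (Qprod_ne_zero hq j)

lemma Qprod_eval (hq : q ≠ 0) (j : ℕ) (k : ℤ) :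
    (Qprod q j : K[X]).eval (phi q k) = ∏ i ∈ Finset.range j, qInt K q (k - (i : ℤ)) := by
  rw [Qprod, eval_prod]
  exact Finset.prod_congr rfl (fun i _ => linp_eval hq i k)

variable (q) in
def Fpoly (m : ℕ) (p : ℕ → K[X]) (d : ℤ) : K[X] :=
  ∑ j ∈ Finset.range (m + 1), C (pCoeff K p j d) * Qprod q j

lemma Fpoly_eval (hq : q ≠ 0) (m : ℕ) (p : ℕ → K[X]) (d k : ℤ) :
    (Fpoly q m p d).eval (phi q k) = beta K q m p d k := by
  rw [Fpoly, eval_finset_sum, beta]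
  exact Finset.sum_congr rfl (fun j _ => by rw [eval_mul, eval_C, Qprod_eval hq])

lemma Fpoly_natDegree (hq : q ≠ 0) (m : ℕ) (p : ℕ → K[X]) (d : ℤ) :
    (Fpoly q m p d).natDegree ≤ m := by
  apply natDegree_sum_le_of_forall_le
  intro j hj
  rw [Finset.mem_range] at hj
  calc (C (pCoeff K p j d) * Qprod q j).natDegree
      ≤ (Qprod q j : K[X]).natDegree := natDegree_C_mul_le _ _
    _ = j := Qprod_natDegree hq j
    _ ≤ m := by omega

lemma Fpoly_ne_zero (hq : q ≠ 0) (m : ℕ) (p : ℕ → K[X]) (d : ℤ)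
    (h : ∃ j ≤ m, pCoeff K p j d ≠ 0) : Fpoly q m p d ≠ 0 := by
  obtain ⟨j0, hj0, hc0⟩ := h
  set Js := (Finset.range (m + 1)).filter (fun j => pCoeff K p j d ≠ 0) with hJs
  have hne : Js.Nonempty := ⟨j0, by simp [hJs, Finset.mem_filter, Finset.mem_range]; exact ⟨by omega, hc0⟩⟩
  set J := Js.max' hne with hJ
  have hJmem : J ∈ Js := Js.max'_mem hne
  have hJc : pCoeff K p J d ≠ 0 := (Finset.mem_filter.mp hJmem).2
  have hJr : J ∈ Finset.range (m + 1) := (Finset.mem_filter.mp hJmem).1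
  intro hF
  have hcoeff : (Fpoly q m p d).coeff J = 0 := by rw [hF]; simp
  rw [Fpoly, finset_sum_coeff] at hcoeff
  rw [Finset.sum_eq_single J] at hcoeff
  · rw [coeff_C_mul] at hcoeff
    have : (Qprod q J : K[X]).coeff J = (Qprod q J : K[X]).leadingCoeff := by
      rw [leadingCoeff, Qprod_natDegree hq]
    rw [this] at hcoeff
    exact (mul_ne_zero hJc (Qprod_leadingCoeff_ne_zero hq J)) hcoeff
  · intro b hb hbJ
    rw [coeff_C_mul]
    by_cases hcb : pCoeff K p b d = 0
    · rw [hcb, zero_mul]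
    · have hble : b ≤ J := Finset.le_max' _ _ (Finset.mem_filter.mpr ⟨hb, hcb⟩)
      have hblt : b < J := lt_of_le_of_ne hble hbJ
      rw [coeff_eq_zero_of_natDegree_lt (by rw [Qprod_natDegree hq]; exact hblt), mul_zero]
  · intro h
    exact absurd hJr h


lemma zeroset_of_ne (hq : q ≠ 0) (hqi : ∀ n : ℤ, n ≠ 0 → qInt K q n ≠ 0)
    (m : ℕ) (p : ℕ → K[X]) (d : ℤ) (hF : Fpoly q m p d ≠ 0) :
    {k : ℤ | beta K q m p d k = 0}.Finite ∧ {k : ℤ | beta K q m p d k = 0}.ncard ≤ m := by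
  have hroots : {x : K | (Fpoly q m p d).IsRoot x}.Finite := Polynomial.finite_setOf_isRoot hF
  have hset : {k : ℤ | beta K q m p d k = 0} =
      phi q ⁻¹' {x : K | (Fpoly q m p d).IsRoot x} := by
    ext k
    simp only [Set.mem_setOf_eq, Set.mem_preimage, IsRoot, Fpoly_eval hq]
  have hinj := phi_injective hq hqi
  have hfin : {k : ℤ | beta K q m p d k = 0}.Finite := by
    rw [hset]; exact hroots.preimage hinj.injOn
  refine ⟨hfin, ?_⟩
  have h1 : {k : ℤ | beta K q m p d k = 0}.ncard =
      (phi q '' {k : ℤ | beta K q m p d k = 0}).ncard :=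
    (Set.ncard_image_of_injective _ hinj).symm
  have h2 : phi q '' {k : ℤ | beta K q m p d k = 0} ⊆
      {x : K | (Fpoly q m p d).IsRoot x} := by
    rw [hset]; exact Set.image_preimage_subset _ _
  have h3 := Set.ncard_le_ncard h2 hroots
  have h4 : {x : K | (Fpoly q m p d).IsRoot x} ⊆ ↑(Fpoly q m p d).roots.toFinset := by
    intro x hx
    rw [Finset.mem_coe, Multiset.mem_toFinset, mem_roots hF]
    exact hx
  have h5 := Set.ncard_le_ncard h4 (Finset.finite_toSet _)
  rw [Set.ncard_coe_finset] at h5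
  have h6 := Multiset.toFinset_card_le (Fpoly q m p d).roots
  have h7 := card_roots' (Fpoly q m p d)
  have h8 := Fpoly_natDegree (p := p) hq m d
  omega

lemma exists_beta_ne (hq : q ≠ 0) (hqi : ∀ n : ℤ, n ≠ 0 → qInt K q n ≠ 0)
    (m : ℕ) (p : ℕ → K[X]) (hp : ∃ j ≤ m, p j ≠ 0) :
    ∃ d k : ℤ, beta K q m p d k ≠ 0 := by
  obtain ⟨j0, hj0, hp0⟩ := hp
  set Js := (Finset.range (m + 1)).filter (fun j => p j ≠ 0) with hJs
  have hne : Js.Nonempty :=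
    ⟨j0, Finset.mem_filter.mpr ⟨Finset.mem_range.mpr (by omega), hp0⟩⟩
  obtain ⟨j1, hj1mem, hj1⟩ :=
    Finset.exists_mem_eq_sup' hne (fun j => ((p j).natDegree : ℤ) - j)
  set d := Js.sup' hne (fun j => ((p j).natDegree : ℤ) - j) with hd0
  have hp1 : p j1 ≠ 0 := (Finset.mem_filter.mp hj1mem).2
  have hj1m : j1 ≤ m := by
    have := (Finset.mem_filter.mp hj1mem).1
    rw [Finset.mem_range] at this; omega
  have hd : (j1 : ℤ) + d = (p j1).natDegree := by rw [hj1]; ring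
  have hc : pCoeff K p j1 d ≠ 0 := by
    rw [pCoeff, if_neg (by omega)]
    have ht : ((j1 : ℤ) + d).toNat = (p j1).natDegree := by omega
    rw [ht]
    show (p j1).leadingCoeff ≠ 0
    exact leadingCoeff_ne_zero.mpr hp1
  have hF : Fpoly q m p d ≠ 0 := Fpoly_ne_zero hq m p d ⟨j1, hj1m, hc⟩
  have hfin := (zeroset_of_ne hq hqi m p d hF).1
  have hnu : {k : ℤ | beta K q m p d k = 0} ≠ Set.univ := by
    intro h
    exact Set.infinite_univ (h ▸ hfin)
  obtain ⟨k, hk⟩ := Set.ne_univ_iff_exists_notMem _ |>.mp hnu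
  exact ⟨d, k, hk⟩

lemma beta_d_bounds (m : ℕ) (p : ℕ → K[X]) (N : ℕ) (hN : ∀ j ≤ m, (p j).natDegree ≤ N)
    (d k : ℤ) (h : beta K q m p d k ≠ 0) : -(m : ℤ) ≤ d ∧ d ≤ (N : ℤ) := by
  have hex : ∃ j ∈ Finset.range (m + 1), pCoeff K p j d ≠ 0 := by
    by_contra hc
    push_neg at hc
    apply h
    rw [beta]
    exact Finset.sum_eq_zero (fun j hj => by rw [hc j hj, zero_mul])
  obtain ⟨j, hj, hcj⟩ := hex
  rw [Finset.mem_range] at hj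
  rw [pCoeff] at hcj
  by_cases hneg : (j : ℤ) + d < 0
  · rw [if_pos hneg] at hcj
    exact absurd rfl hcj
  · rw [if_neg hneg] at hcj
    have h2 : ((j : ℤ) + d).toNat ≤ (p j).natDegree := le_natDegree_of_ne_zero hcj
    have h3 := hN j (by omega)
    omega

end BetaAux

namespace OpAux

variable {K : Type*} [Field K] (q : K)

lemma Mop_pow_apply (i : ℕ) (a : ℤ → K) (n : ℤ) : ((Mop K ^ i) a) n = a (n - i) := by
  induction i generalizing a with
  | zero => simp
  | succ i ih =>
    rw [pow_succ, Module.End.mul_apply]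
    show ((Mop K ^ i) (fun k => a (k - 1))) n = a (n - (i + 1 : ℕ))
    rw [ih]
    congr 1
    push_cast
    ring

lemma Dq_pow_apply (j : ℕ) (a : ℤ → K) (n : ℤ) :
    ((Dq K q ^ j) a) n = (∏ i ∈ Finset.range j, qInt K q (n + 1 + i)) * a (n + j) := by
  induction j generalizing a with
  | zero => simp
  | succ j ih =>
    rw [pow_succ, Module.End.mul_apply]
    show ((Dq K q ^ j) (fun k => qInt K q (k + 1) * a (k + 1))) n = _
    rw [ih]
    rw [Finset.prod_range_succ, mul_assoc]
    congr 1
    congr 1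
    · congr 1
      ring
    · congr 1
      push_cast
      ring

lemma aeval_Mop_apply (f : K[X]) (N : ℕ) (hN : f.natDegree < N + 1) (a : ℤ → K) (n : ℤ) :
    ((aeval (Mop K) f) a) n = ∑ i ∈ Finset.range (N + 1), f.coeff i * a (n - i) := by
  rw [aeval_eq_sum_range' hN, LinearMap.coe_sum, Finset.sum_apply, Finset.sum_apply]
  apply Finset.sum_congr rfl
  intro i _
  rw [LinearMap.smul_apply, Pi.smul_apply, smul_eq_mul, Mop_pow_apply]

lemma inner_eq (m : ℕ) (p : ℕ → K[X]) (N : ℕ) (j : ℕ) (hj : j ≤ m)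
    (hNj : (p j).natDegree ≤ N) (a : ℤ → K) (n : ℤ) :
    ∑ i ∈ Finset.range (N + 1), (p j).coeff i *
        ((∏ t ∈ Finset.range j, qInt K q (n - i + 1 + t)) * a (n - i + j)) =
    ∑ d ∈ Finset.Icc (-(m : ℤ)) (N : ℤ), pCoeff K p j d *
        (∏ t ∈ Finset.range j, qInt K q ((n - d) - t)) * a (n - d) := by
  have hinj : Set.InjOn (fun i : ℕ => (i : ℤ) - j) ↑(Finset.range (N + 1)) := by
    intro x _ y _ h
    simp only at h
    omega
  have himg : (Finset.range (N + 1)).image (fun i : ℕ => (i : ℤ) - j) ⊆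
      Finset.Icc (-(m : ℤ)) (N : ℤ) := by
    intro d hd
    rw [Finset.mem_image] at hd
    obtain ⟨i, hi, rfl⟩ := hd
    rw [Finset.mem_range] at hi
    rw [Finset.mem_Icc]
    omega
  have hz : ∀ d ∈ Finset.Icc (-(m : ℤ)) (N : ℤ),
      d ∉ (Finset.range (N + 1)).image (fun i : ℕ => (i : ℤ) - j) →
      pCoeff K p j d * (∏ t ∈ Finset.range j, qInt K q ((n - d) - t)) * a (n - d) = 0 := by
    intro d hd hnd
    rw [Finset.mem_Icc] at hd
    suffices hs : pCoeff K p j d = 0 by rw [hs, zero_mul, zero_mul]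
    rw [pCoeff]
    by_cases hneg : (j : ℤ) + d < 0
    · rw [if_pos hneg]
    · rw [if_neg hneg]
      by_cases hle : (j : ℤ) + d ≤ N
      · exfalso
        apply hnd
        rw [Finset.mem_image]
        exact ⟨((j : ℤ) + d).toNat, Finset.mem_range.mpr (by omega), by omega⟩
      · exact coeff_eq_zero_of_natDegree_lt (by omega)
  rw [← Finset.sum_subset himg hz, Finset.sum_image (fun x hx y hy h => hinj hx hy h)]
  apply Finset.sum_congr rfl
  intro i hi
  have hpc : pCoeff K p j ((i : ℤ) - j) = (p j).coeff i := by
    rw [pCoeff, if_neg (by omega)]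
    congr 1
    omega
  have ha : n - ((i : ℤ) - j) = n - i + j := by ring
  rw [hpc, ha]
  have hprod : (∏ t ∈ Finset.range j, qInt K q (n - i + j - t)) =
      ∏ t ∈ Finset.range j, qInt K q (n - i + 1 + t) := by
    rw [← Finset.prod_range_reflect]
    apply Finset.prod_congr rfl
    intro t ht
    rw [Finset.mem_range] at ht
    congr 1
    omega
  have harg : ∀ t : ℕ, n - i + (j : ℤ) - t = n - ((i : ℤ) - j) - t := by intro t; ring
  rw [← hprod]
  ring

lemma P_apply (m : ℕ) (p : ℕ → K[X]) (N : ℕ) (hN : ∀ j ≤ m, (p j).natDegree ≤ N)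
    (a : ℤ → K) (n : ℤ) :
    ((∑ j ∈ Finset.range (m + 1), aeval (Mop K) (p j) * Dq K q ^ j) a) n =
    ∑ d ∈ Finset.Icc (-(m : ℤ)) (N : ℤ), beta K q m p d (n - d) * a (n - d) := by
  rw [LinearMap.coe_sum, Finset.sum_apply, Finset.sum_apply]
  have hL : ∀ j ∈ Finset.range (m + 1), ((aeval (Mop K) (p j) * Dq K q ^ j) a) n =
      ∑ i ∈ Finset.range (N + 1), (p j).coeff i *
        ((∏ t ∈ Finset.range j, qInt K q (n - i + 1 + t)) * a (n - i + j)) := by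
    intro j hj
    rw [Finset.mem_range] at hj
    rw [Module.End.mul_apply,
      aeval_Mop_apply (p j) N (by have := hN j (by omega); omega) _ n]
    apply Finset.sum_congr rfl
    intro i _
    rw [Dq_pow_apply]
  rw [Finset.sum_congr rfl hL]
  have hR : ∀ d ∈ Finset.Icc (-(m : ℤ)) (N : ℤ), beta K q m p d (n - d) * a (n - d) =
      ∑ j ∈ Finset.range (m + 1), pCoeff K p j d *
        (∏ t ∈ Finset.range j, qInt K q ((n - d) - t)) * a (n - d) := by
    intro d _
    rw [beta, Finset.sum_mul]
  rw [Finset.sum_congr rfl hR]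
  conv_rhs => rw [Finset.sum_comm]
  apply Finset.sum_congr rfl
  intro j hj
  rw [Finset.mem_range] at hj
  exact inner_eq q m p N j (by omega) (hN j (by omega)) a n

end OpAux

/-- for `P = Σ_{j=0}^m p_j(M) D_q^j ≠ 0`, the set of `d` with `β_d ≢ 0`
is nonempty and finite, and with `d_max`, `d_min` its extrema and `N_max`, `N_min` the
numbers of zeroes of `β_{d_max}`, `β_{d_min}`, one has
`d_max − d_min ≤ dim ker P ≤ d_max − d_min + min(N_max, N_min) ≤ d_max − d_min + m`. -/
theorem dim_ker_bounds (K : Type*) [Field K] (q : K) (hq : q ≠ 0)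
    (hqi : ∀ n : ℤ, n ≠ 0 → qInt K q n ≠ 0)
    (m : ℕ) (p : ℕ → K[X]) (hp : ∃ j ≤ m, p j ≠ 0)
    (P : Module.End K (ℤ → K))
    (hP : P = ∑ j ∈ Finset.range (m + 1), aeval (Mop K) (p j) * Dq K q ^ j) :
    {d : ℤ | ∃ k : ℤ, beta K q m p d k ≠ 0}.Nonempty ∧
    {d : ℤ | ∃ k : ℤ, beta K q m p d k ≠ 0}.Finite ∧
    FiniteDimensional K (LinearMap.ker P) ∧
    ∀ dmax dmin : ℤ,
      IsGreatest {d : ℤ | ∃ k : ℤ, beta K q m p d k ≠ 0} dmax →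
      IsLeast {d : ℤ | ∃ k : ℤ, beta K q m p d k ≠ 0} dmin →
      dmax - dmin ≤ (Module.finrank K (LinearMap.ker P) : ℤ) ∧
      (Module.finrank K (LinearMap.ker P) : ℤ) ≤
        dmax - dmin +
          (min {k : ℤ | beta K q m p dmax k = 0}.ncard
               {k : ℤ | beta K q m p dmin k = 0}.ncard : ℕ) ∧
      dmax - dmin +
          (min {k : ℤ | beta K q m p dmax k = 0}.ncard
               {k : ℤ | beta K q m p dmin k = 0}.ncard : ℕ) ≤
        dmax - dmin + (m : ℤ) := by
  classical
  set SD := {d : ℤ | ∃ k : ℤ, beta K q m p d k ≠ 0} with hSD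
  set N := (Finset.range (m + 1)).sup (fun j => (p j).natDegree) with hNdef
  have hN : ∀ j ≤ m, (p j).natDegree ≤ N := by
    intro j hj
    exact Finset.le_sup (f := fun j => (p j).natDegree) (Finset.mem_range.mpr (Nat.lt_succ_of_le hj))
  have hne : SD.Nonempty := by
    obtain ⟨d, k, h⟩ := BetaAux.exists_beta_ne hq hqi m p hp
    exact ⟨d, k, h⟩
  have hsub : SD ⊆ Set.Icc (-(m : ℤ)) (N : ℤ) := by
    rintro d ⟨k, hk⟩
    exact Set.mem_Icc.mpr (BetaAux.beta_d_bounds m p N hN d k hk)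
  have hfin : SD.Finite := (Set.finite_Icc _ _).subset hsub
  have hFne : ∀ d ∈ SD, BetaAux.Fpoly q m p d ≠ 0 := by
    rintro d ⟨k, hk⟩ h
    apply hk
    rw [← BetaAux.Fpoly_eval hq, h, eval_zero]
  have key : ∀ dmax dmin : ℤ, IsGreatest SD dmax → IsLeast SD dmin →
      FiniteDimensional K (LinearMap.ker P) ∧
      (dmax - dmin ≤ (Module.finrank K (LinearMap.ker P) : ℤ) ∧
      (Module.finrank K (LinearMap.ker P) : ℤ) ≤
        dmax - dmin +
          (min {k : ℤ | beta K q m p dmax k = 0}.ncard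
               {k : ℤ | beta K q m p dmin k = 0}.ncard : ℕ) ∧
      dmax - dmin +
          (min {k : ℤ | beta K q m p dmax k = 0}.ncard
               {k : ℤ | beta K q m p dmin k = 0}.ncard : ℕ) ≤
        dmax - dmin + (m : ℤ)) := by
    intro dmax dmin hmax hmin
    have hdle : dmin ≤ dmax := hmin.2 hmax.1
    set r : ℕ := (dmax - dmin).toNat with hr
    have hrz : (r : ℤ) = dmax - dmin := by omega
    set Tmax := {k : ℤ | beta K q m p dmax k = 0} with hTmax
    set Tmin := {k : ℤ | beta K q m p dmin k = 0} with hTmin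
    obtain ⟨hTmaxfin, hTmaxcard⟩ :=
      BetaAux.zeroset_of_ne hq hqi m p dmax (hFne dmax hmax.1)
    obtain ⟨hTminfin, hTmincard⟩ :=
      BetaAux.zeroset_of_ne hq hqi m p dmin (hFne dmin hmin.1)
    rw [← hTmax] at hTmaxcard
    rw [← hTmin] at hTmincard
    have hout : ∀ d : ℤ, (d < dmin ∨ dmax < d) → ∀ k, beta K q m p d k = 0 := by
      intro d hd k
      by_contra h
      have hmem : d ∈ SD := ⟨k, h⟩
      rcases hd with h1 | h1
      · exact absurd (hmin.2 hmem) (by omega)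
      · exact absurd (hmax.2 hmem) (by omega)
    set γmin : ℕ → ℤ → K := fun e n => beta K q m p (dmin + e) (n - e) with hγmin
    set γmax : ℕ → ℤ → K := fun e n => beta K q m p (dmax - e) ((e : ℤ) - n) with hγmax
    -- pointwise formula
    have hsub' : Finset.Icc dmin dmax ⊆ Finset.Icc (-(m : ℤ)) (N : ℤ) := by
      intro d hd
      rw [Finset.mem_Icc] at hd ⊢
      have h1 := Set.mem_Icc.mp (hsub hmax.1)
      have h2 := Set.mem_Icc.mp (hsub hmin.1)
      omega
    have himg2 : Finset.Icc dmin dmax =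
        (Finset.range (r + 1)).image (fun e : ℕ => dmin + (e : ℤ)) := by
      ext d
      simp only [Finset.mem_Icc, Finset.mem_image, Finset.mem_range]
      constructor
      · intro hd
        exact ⟨(d - dmin).toNat, by omega, by omega⟩
      · rintro ⟨e, he, rfl⟩
        omega
    have hPA : ∀ (a : ℤ → K) (n : ℤ), (P a) (n + dmin) = RecAux.Csum r γmin a n := by
      intro a n
      rw [hP, OpAux.P_apply q m p N hN a (n + dmin)]
      have hz' : ∀ d ∈ Finset.Icc (-(m : ℤ)) (N : ℤ), d ∉ Finset.Icc dmin dmax →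
          beta K q m p d (n + dmin - d) * a (n + dmin - d) = 0 := by
        intro d _ hd
        rw [Finset.mem_Icc] at hd
        rw [hout d (by omega), zero_mul]
      rw [← Finset.sum_subset hsub' hz', RecAux.Csum, himg2,
        Finset.sum_image (fun x _ y _ h => by omega)]
      apply Finset.sum_congr rfl
      intro e _
      have harg : n + dmin - (dmin + (e : ℤ)) = n - e := by ring
      rw [harg, hγmin]
    have hkerEq : LinearMap.ker P = RecAux.solSpace r γmin := by
      ext a
      rw [LinearMap.mem_ker]
      constructor
      · intro h n
        rw [← hPA a n, h]
        rfl
      · intro h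
        funext n'
        show (P a) n' = 0
        have h2 := hPA a (n' - dmin)
        rw [show n' - dmin + dmin = n' by ring] at h2
        rw [h2]
        exact h (n' - dmin)
    -- main_rec for γmin
    obtain ⟨b1, hb1⟩ := hTmaxfin.bddAbove
    obtain ⟨b2, hb2⟩ := hTminfin.bddAbove
    obtain ⟨c1, hc1⟩ := hTmaxfin.bddBelow
    obtain ⟨c2, hc2⟩ := hTminfin.bddBelow
    have hrec1 := RecAux.main_rec r γmin (max (b1 + r) b2) hTmaxfin.toFinset
      (by
        intro t
        rw [Set.Finite.mem_toFinset]
        show beta K q m p (dmin + (r : ℤ)) ((t + r) - r) = 0 ↔ t ∈ Tmax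
        rw [show dmin + (r : ℤ) = dmax by omega, show (t + r) - (r : ℤ) = t by ring]
        rfl)
      (by
        intro t ht
        rw [Set.Finite.mem_toFinset] at ht
        have := hb1 ht
        omega)
      (by
        intro n hn h
        have hmem : n ∈ Tmin := by
          show beta K q m p dmin n = 0
          have : γmin 0 n = beta K q m p dmin n := by
            rw [hγmin]
            norm_num
          rwa [this] at h
        have := hb2 hmem
        omega)
    obtain ⟨hfd1, hlow1, hup1⟩ := hrec1
    have hfdP : FiniteDimensional K (LinearMap.ker P) := by rw [hkerEq]; exact hfd1
    have hfr1 : Module.finrank K (LinearMap.ker P) =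
        Module.finrank K (RecAux.solSpace r γmin) := by rw [hkerEq]
    have hcard1 : (hTmaxfin.toFinset).card = Tmax.ncard :=
      (Set.ncard_eq_toFinset_card Tmax hTmaxfin).symm
    -- mirror system
    have hker2 : ∀ b : ℤ → K,
        ((fun n => b (-n)) ∈ LinearMap.ker P) ↔ b ∈ RecAux.solSpace r γmax := by
      intro b
      have hrefl : ∀ n : ℤ, RecAux.Csum r γmax b n =
          RecAux.Csum r γmin (fun k => b (-k)) ((r : ℤ) - n) := by
        intro n
        rw [RecAux.Csum, RecAux.Csum,
          ← Finset.sum_range_reflect (fun e => γmax e n * b (n - (e : ℤ))) (r + 1)]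
        apply Finset.sum_congr rfl
        intro e he
        rw [Finset.mem_range] at he
        simp only [hγmin, hγmax]
        have h1 : r + 1 - 1 - e = r - e := by omega
        rw [h1]
        have e1 : dmax - ((r - e : ℕ) : ℤ) = dmin + e := by omega
        have e2 : ((r - e : ℕ) : ℤ) - n = ((r : ℤ) - n) - e := by omega
        have e3 : n - ((r - e : ℕ) : ℤ) = -(((r : ℤ) - n) - e) := by omega
        rw [e1, e2, e3]
      constructor
      · intro h n
        show RecAux.Csum r γmax b n = 0
        rw [hrefl n, ← hPA (fun k => b (-k)) ((r : ℤ) - n)]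
        rw [LinearMap.mem_ker] at h
        rw [h]
        rfl
      · intro h
        rw [LinearMap.mem_ker]
        funext n'
        show (P (fun n => b (-n))) n' = 0
        have h2 := hPA (fun k => b (-k)) (n' - dmin)
        rw [show n' - dmin + dmin = n' by ring] at h2
        rw [h2]
        have h3 := hrefl ((r : ℤ) - (n' - dmin))
        rw [show (r : ℤ) - ((r : ℤ) - (n' - dmin)) = n' - dmin by ring] at h3
        rw [← h3]
        exact h _
    -- transport the kernel along the reflection
    let Rlin : (ℤ → K) →ₗ[K] (ℤ → K) :=
      { toFun := fun a n => a (-n)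
        map_add' := fun a b => rfl
        map_smul' := fun c a => rfl }
    have hRR : Rlin.comp Rlin = LinearMap.id := by
      apply LinearMap.ext
      intro a
      funext n
      show a (- -n) = a n
      rw [neg_neg]
    let ρ : (ℤ → K) ≃ₗ[K] (ℤ → K) := LinearEquiv.ofLinear Rlin Rlin hRR hRR
    have hmapEq : Submodule.map (ρ : (ℤ → K) →ₗ[K] (ℤ → K)) (LinearMap.ker P) = RecAux.solSpace r γmax := by
      ext b
      rw [Submodule.mem_map_equiv]
      exact hker2 b
    have hfr2 : Module.finrank K (LinearMap.ker P) =
        Module.finrank K (RecAux.solSpace r γmax) := by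
      rw [← hmapEq, LinearEquiv.finrank_map_eq]
    -- main_rec for the mirror system
    set S2 := {t : ℤ | beta K q m p dmin (-t) = 0} with hS2
    have hS2eq : S2 = Neg.neg '' Tmin := by
      ext t
      simp only [hS2, Set.mem_setOf_eq, Set.mem_image]
      constructor
      · intro h
        exact ⟨-t, h, by ring⟩
      · rintro ⟨x, hx, rfl⟩
        rw [neg_neg]
        exact hx
    have hS2fin : S2.Finite := by
      rw [hS2eq]
      exact hTminfin.image _
    have hS2card : S2.ncard = Tmin.ncard := by
      rw [hS2eq, Set.ncard_image_of_injective _ neg_injective]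
    have hrec2 := RecAux.main_rec r γmax (max (-c1) ((r : ℤ) - c2)) hS2fin.toFinset
      (by
        intro t
        rw [Set.Finite.mem_toFinset]
        show beta K q m p (dmax - (r : ℤ)) ((r : ℤ) - (t + r)) = 0 ↔ t ∈ S2
        rw [show dmax - (r : ℤ) = dmin by omega, show (r : ℤ) - (t + r) = -t by ring]
        rfl)
      (by
        intro t ht
        rw [Set.Finite.mem_toFinset] at ht
        have h1 : -t ∈ Tmin := by
          rw [hS2eq] at ht
          obtain ⟨x, hx, rfl⟩ := ht
          rwa [neg_neg]
        have := hc2 h1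
        omega)
      (by
        intro n hn h
        have h1 : γmax 0 n = beta K q m p dmax (-n) := by
          rw [hγmax]
          norm_num
        rw [h1] at h
        have h2 : -n ∈ Tmax := h
        have := hc1 h2
        omega)
    obtain ⟨hfd2, hlow2, hup2⟩ := hrec2
    have hcard2 : hS2fin.toFinset.card = Tmin.ncard := by
      rw [← Set.ncard_eq_toFinset_card S2 hS2fin, hS2card]
    -- final numeric assembly
    have hx1 : r ≤ Module.finrank K (LinearMap.ker P) := by
      rw [hfr1]
      exact hlow1
    have hx2 : Module.finrank K (LinearMap.ker P) ≤ r + Tmax.ncard := by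
      rw [hfr1]
      rw [hcard1] at hup1
      exact hup1
    have hx3 : Module.finrank K (LinearMap.ker P) ≤ r + Tmin.ncard := by
      rw [hfr2]
      rw [hcard2] at hup2
      exact hup2
    refine ⟨hfdP, by omega, by omega, by omega⟩
  have hgreat : ∃ d, IsGreatest SD d := by
    refine ⟨hfin.toFinset.max' (hfin.toFinset_nonempty.mpr hne), ?_, ?_⟩
    · exact hfin.mem_toFinset.mp (hfin.toFinset.max'_mem _)
    · intro b hb
      exact hfin.toFinset.le_max' b (hfin.mem_toFinset.mpr hb)
  have hleast : ∃ d, IsLeast SD d := by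
    refine ⟨hfin.toFinset.min' (hfin.toFinset_nonempty.mpr hne), ?_, ?_⟩
    · exact hfin.mem_toFinset.mp (hfin.toFinset.min'_mem _)
    · intro b hb
      exact hfin.toFinset.min'_le b (hfin.mem_toFinset.mpr hb)
  obtain ⟨dmax0, hmax0⟩ := hgreat
  obtain ⟨dmin0, hmin0⟩ := hleast
  exact ⟨hne, hfin, (key dmax0 dmin0 hmax0 hmin0).1,
    fun dmax dmin hg hl => (key dmax dmin hg hl).2⟩
end
end

section
/- Let P = Σ_{j=0}^m p_j(M) D_q^j be an element of H_K(q) acting on L which is not constant (not a scalar multiple of the identity), and let d_max and d_min be the maximum and minimum of the nonempty finite set {d ∈ ℤ : β_d is not identically zero}. Then for every λ ∈ K one has dim_K ker(P − λ·id) ≤ |d_max| + |d_min| + m. -/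
open Polynomial
open scoped Classical

noncomputable section

section Aux
variable {K : Type*} [Field K] (q : K)

lemma Mop_pow_apply (i : ℕ) (a : ℤ → K) (n : ℤ) : ((Mop K ^ i) a) n = a (n - i) := by
  induction i generalizing a n with
  | zero => simp
  | succ i ih =>
    rw [pow_succ', Module.End.mul_apply]
    show ((Mop K ^ i) a) (n - 1) = _
    rw [ih]; congr 1; push_cast; ring

lemma Dq_pow_apply (j : ℕ) (a : ℤ → K) (n : ℤ) :
    ((Dq K q ^ j) a) n = (∏ l ∈ Finset.range j, qInt K q (n + l + 1)) * a (n + j) := by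
  induction j generalizing a n with
  | zero => simp
  | succ j ih =>
    rw [pow_succ', Module.End.mul_apply]
    show qInt K q (n + 1) * (((Dq K q ^ j) a) (n + 1)) = _
    rw [ih, Finset.prod_range_succ']
    push_cast
    have h1 : ∀ l ∈ Finset.range j, qInt K q (n + (↑l + 1) + 1) = qInt K q (n + 1 + ↑l + 1) :=
      fun l _ => by norm_num; ring_nf
    rw [Finset.prod_congr rfl h1]
    have h2 : n + (↑j + 1) = n + 1 + ↑j := by ring
    have h3 : n + 0 + 1 = n + 1 := by ring
    rw [h2, h3]; ring

lemma aeval_Mop_apply (P' : K[X]) (B : ℕ) (hB : P'.natDegree < B + 1) (a : ℤ → K) (n : ℤ) :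
    ((aeval (Mop K) P') a) n = ∑ i ∈ Finset.range (B + 1), P'.coeff i * a (n - i) := by
  rw [aeval_eq_sum_range' hB]
  rw [LinearMap.sum_apply]
  simp only [Finset.sum_apply, LinearMap.smul_apply, Pi.smul_apply, smul_eq_mul]
  exact Finset.sum_congr rfl fun i _ => by rw [Mop_pow_apply]

lemma sum_reindex (m B : ℕ) (p : ℕ → K[X]) (hB : ∀ j, j ≤ m → (p j).natDegree ≤ B)
    (j : ℕ) (hj : j ≤ m) (a : ℤ → K) (n : ℤ) :
    ∑ i ∈ Finset.range (B + 1),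
        (p j).coeff i * ((∏ l ∈ Finset.range j, qInt K q (n - i + l + 1)) * a (n - i + j)) =
    ∑ d ∈ Finset.Icc (-(m : ℤ)) (B : ℤ),
        pCoeff K p j d * ((∏ l ∈ Finset.range j, qInt K q (n - d - l)) * a (n - d)) := by
  have hsub : Finset.Icc (-(j : ℤ)) ((B : ℤ) - j) ⊆ Finset.Icc (-(m : ℤ)) (B : ℤ) := by
    intro d hd
    simp only [Finset.mem_Icc] at *
    omega
  rw [← Finset.sum_subset hsub]
  · apply Finset.sum_nbij' (fun i : ℕ => (i : ℤ) - j) (fun d : ℤ => (j + d).toNat)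
    · intro i hi; simp only [Finset.mem_range] at hi; simp only [Finset.mem_Icc]; omega
    · intro d hd; simp only [Finset.mem_Icc] at hd; simp only [Finset.mem_range]; omega
    · intro i hi; simp only [Finset.mem_range] at hi; omega
    · intro d hd; simp only [Finset.mem_Icc] at hd; omega
    · intro i hi
      simp only [Finset.mem_range] at hi
      have hco : pCoeff K p j ((i : ℤ) - j) = (p j).coeff i := by
        unfold pCoeff
        rw [if_neg (by omega)]
        congr 1
        omega
      rw [hco]
      congr 1
      have harg : n - ((i : ℤ) - j) = n - i + j := by ring
      rw [harg]
      congr 1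
      rw [← Finset.prod_range_reflect (fun l => qInt K q (n - i + l + 1)) j]
      apply Finset.prod_congr rfl
      intro l hl
      simp only [Finset.mem_range] at hl
      congr 1
      have : ((j - 1 - l : ℕ) : ℤ) = (j : ℤ) - 1 - l := by omega
      rw [this]
      ring
  · intro d hd hnd
    simp only [Finset.mem_Icc] at hd
    simp only [Finset.mem_Icc, not_and, not_le] at hnd
    rcases lt_or_ge d (-(j : ℤ)) with h | h
    · rw [pCoeff, if_pos (by omega), zero_mul]
    · have h2 : (B : ℤ) - j < d := hnd h
      rw [pCoeff, if_neg (by omega)]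
      rw [Polynomial.coeff_eq_zero_of_natDegree_lt (by have := hB j hj; omega), zero_mul]

lemma P_apply (m B : ℕ) (p : ℕ → K[X]) (hB : ∀ j, j ≤ m → (p j).natDegree ≤ B)
    (a : ℤ → K) (n : ℤ) :
    ((∑ j ∈ Finset.range (m + 1), aeval (Mop K) (p j) * Dq K q ^ j) a) n =
    ∑ d ∈ Finset.Icc (-(m : ℤ)) (B : ℤ), beta K q m p d (n - d) * a (n - d) := by
  rw [LinearMap.sum_apply]
  simp only [Finset.sum_apply]
  have step : ∀ j ∈ Finset.range (m + 1),
      ((aeval (Mop K) (p j) * Dq K q ^ j) a) n =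
      ∑ d ∈ Finset.Icc (-(m : ℤ)) (B : ℤ),
        pCoeff K p j d * ((∏ l ∈ Finset.range j, qInt K q (n - d - l)) * a (n - d)) := by
    intro j hj
    simp only [Finset.mem_range] at hj
    rw [Module.End.mul_apply]
    rw [aeval_Mop_apply (p j) B (by have := hB j (by omega); omega) _ n]
    rw [← sum_reindex q m B p hB j (by omega) a n]
    apply Finset.sum_congr rfl
    intro i _
    rw [Dq_pow_apply]
  rw [Finset.sum_congr rfl step, Finset.sum_comm]
  apply Finset.sum_congr rfl
  intro d _
  rw [beta, Finset.sum_mul]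
  apply Finset.sum_congr rfl
  intro j _
  ring

lemma exists_poly (hq : q ≠ 0) (hqi : ∀ n : ℤ, n ≠ 0 → qInt K q n ≠ 0) :
    ∃ e : ℤ → K, Function.Injective e ∧ ∃ G : ℕ → K[X],
      (∀ j, (G j).natDegree ≤ j) ∧
      ∀ j k, (G j).eval (e k) = ∏ i ∈ Finset.range j, qInt K q (k - (i : ℤ)) := by
  by_cases h1 : q = 1
  · refine ⟨fun k => (k : K), ?_, fun j => ∏ i ∈ Finset.range j, (X - C (i : K)), ?_, ?_⟩
    · intro k l hkl
      simp only at hkl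
      have := hqi (k - l)
      rw [qInt, if_pos h1] at this
      by_contra hne
      exact this (by omega) (by push_cast; rw [hkl]; ring)
    · intro j
      refine le_trans (Polynomial.natDegree_prod_le _ _) ?_
      calc ∑ i ∈ Finset.range j, (X - C (i : K)).natDegree
          ≤ ∑ _i ∈ Finset.range j, 1 := by
            apply Finset.sum_le_sum; intro i _; exact Polynomial.natDegree_X_sub_C_le _
        _ = j := by simp
    · intro j k
      rw [Polynomial.eval_prod]
      apply Finset.prod_congr rfl
      intro i _
      rw [qInt, if_pos h1]
      push_cast
      simp
  · refine ⟨fun k => q ^ k, ?_, fun j => ∏ i ∈ Finset.range j,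
      (C (q ^ (-(i : ℤ)) * (q - 1)⁻¹) * X - C ((q - 1)⁻¹)), ?_, ?_⟩
    · intro k l hkl
      simp only at hkl
      by_contra hne
      have h2 := hqi (k - l) (by omega)
      rw [qInt, if_neg h1] at h2
      apply h2
      rw [zpow_sub₀ hq, hkl, div_self (zpow_ne_zero _ hq)]
      simp
    · intro j
      refine le_trans (Polynomial.natDegree_prod_le _ _) ?_
      calc ∑ i ∈ Finset.range j, (C (q ^ (-(i : ℤ)) * (q - 1)⁻¹) * X - C ((q - 1)⁻¹)).natDegree
          ≤ ∑ _i ∈ Finset.range j, 1 := by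
            apply Finset.sum_le_sum; intro i _
            refine le_trans (Polynomial.natDegree_sub_le _ _) ?_
            simp only [Polynomial.natDegree_C, max_le_iff]
            constructor
            · exact le_trans (Polynomial.natDegree_C_mul_le _ _) (by simp)
            · omega
        _ = j := by simp
    · intro j k
      rw [Polynomial.eval_prod]
      apply Finset.prod_congr rfl
      intro i _
      rw [qInt, if_neg h1]
      simp only [Polynomial.eval_sub, Polynomial.eval_mul, Polynomial.eval_C, Polynomial.eval_X]
      have hq1 : q - 1 ≠ 0 := sub_ne_zero.mpr h1
      field_simp
      have hz : q ^ (k - (i : ℤ)) * q ^ (i : ℕ) = q ^ k := by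
        rw [← zpow_natCast q i, ← zpow_add₀ hq]; congr 1; ring
      rw [← zpow_add₀ hq, neg_add_eq_sub]

lemma zeros_bound (hq : q ≠ 0) (hqi : ∀ n : ℤ, n ≠ 0 → qInt K q n ≠ 0)
    (m : ℕ) (c : ℕ → K) (μ : K)
    (γ : ℤ → K)
    (hγ : ∀ k, γ k = (∑ j ∈ Finset.range (m + 1),
        c j * ∏ i ∈ Finset.range j, qInt K q (k - (i : ℤ))) - μ)
    (hne : ∃ k, γ k ≠ 0) :
    ∃ Z : Finset ℤ, Z.card ≤ m ∧ ∀ k ∉ Z, γ k ≠ 0 := by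
  obtain ⟨e, he, G, hGdeg, hGeval⟩ := exists_poly q hq hqi
  set F : K[X] := (∑ j ∈ Finset.range (m + 1), C (c j) * G j) - C μ with hF
  have heval : ∀ k, F.eval (e k) = γ k := by
    intro k
    rw [hγ, hF]
    simp only [Polynomial.eval_sub, Polynomial.eval_finset_sum, Polynomial.eval_mul,
      Polynomial.eval_C]
    congr 1
    exact Finset.sum_congr rfl fun j _ => by rw [hGeval]
  obtain ⟨k₀, hk₀⟩ := hne
  have hF0 : F ≠ 0 := by
    intro h
    apply hk₀
    rw [← heval, h, Polynomial.eval_zero]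
  have hdeg : F.natDegree ≤ m := by
    refine le_trans (Polynomial.natDegree_sub_le _ _) ?_
    simp only [Polynomial.natDegree_C, max_le_iff]
    refine ⟨?_, by omega⟩
    apply Polynomial.natDegree_sum_le_of_forall_le
    intro j hj
    simp only [Finset.mem_range] at hj
    exact le_trans (Polynomial.natDegree_C_mul_le _ _) (by have := hGdeg j; omega)
  refine ⟨Finset.preimage F.roots.toFinset e (Set.injOn_of_injective he), ?_, ?_⟩
  · calc (Finset.preimage F.roots.toFinset e _).card
        = ((Finset.preimage F.roots.toFinset e (Set.injOn_of_injective he)).image e).card := by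
          rw [Finset.card_image_of_injective _ he]
      _ ≤ F.roots.toFinset.card := by
          apply Finset.card_le_card
          intro x hx
          simp only [Finset.mem_image] at hx
          obtain ⟨k, hk, rfl⟩ := hx
          exact (Finset.mem_preimage).mp hk
      _ ≤ Multiset.card F.roots := Multiset.toFinset_card_le _
      _ ≤ F.natDegree := Polynomial.card_roots' F
      _ ≤ m := hdeg
  · intro k hk
    rw [← heval]
    intro hzero
    apply hk
    rw [Finset.mem_preimage, Multiset.mem_toFinset, Polynomial.mem_roots hF0]
    exact hzero

lemma finrank_le_card (V : Submodule K (ℤ → K)) (S : Finset ℤ)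
    (h : ∀ a : ℤ → K, a ∈ V → (∀ s ∈ S, a s = 0) → a = 0) :
    FiniteDimensional K V ∧ Module.finrank K V ≤ S.card := by
  let f : V →ₗ[K] ({ x // x ∈ S } → K) :=
    (LinearMap.funLeft K K (Subtype.val : S → ℤ)).comp V.subtype
  have hinj : Function.Injective f := by
    rw [← LinearMap.ker_eq_bot]
    apply (Submodule.eq_bot_iff _).mpr
    intro x hx
    have hx' : ∀ s ∈ S, (x : ℤ → K) s = 0 := by
      intro s hs
      have := congrFun (LinearMap.mem_ker.mp hx) ⟨s, hs⟩
      exact this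
    exact Subtype.ext (h x x.2 hx')
  have hfd : FiniteDimensional K ({ x // x ∈ S } → K) := by infer_instance
  refine ⟨FiniteDimensional.of_injective f hinj, ?_⟩
  calc Module.finrank K V ≤ Module.finrank K ({ x // x ∈ S } → K) :=
        LinearMap.finrank_le_finrank_of_injective hinj
    _ = S.card := by rw [Module.finrank_pi]; exact Fintype.card_coe S

end Aux

/-- for a non-constant `P = Σ_{j=0}^m p_j(M) D_q^j` and every `λ ∈ K`,
`dim ker(P − λ·id) ≤ |d_max| + |d_min| + m`. -/

theorem uniform_eigenspace_bound (K : Type*) [Field K] (q : K) (hq : q ≠ 0)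
    (hqi : ∀ n : ℤ, n ≠ 0 → qInt K q n ≠ 0)
    (m : ℕ) (p : ℕ → K[X]) (P : Module.End K (ℤ → K))
    (hP : P = ∑ j ∈ Finset.range (m + 1), aeval (Mop K) (p j) * Dq K q ^ j)
    (hnc : ∀ c : K, P ≠ c • (1 : Module.End K (ℤ → K)))
    (dmax dmin : ℤ)
    (hmax : IsGreatest {d : ℤ | ∃ k : ℤ, beta K q m p d k ≠ 0} dmax)
    (hmin : IsLeast {d : ℤ | ∃ k : ℤ, beta K q m p d k ≠ 0} dmin) :
    ∀ lam : K,
      FiniteDimensional K (LinearMap.ker (P - lam • (1 : Module.End K (ℤ → K)))) ∧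
      (Module.finrank K (LinearMap.ker (P - lam • (1 : Module.End K (ℤ → K)))) : ℤ) ≤
        |dmax| + |dmin| + (m : ℤ) := by
  intro lam
  set B : ℕ := (Finset.range (m + 1)).sup fun j => (p j).natDegree with hBdef
  have hB : ∀ j, j ≤ m → (p j).natDegree ≤ B := fun j hj =>
    Finset.le_sup (f := fun j => (p j).natDegree) (Finset.mem_range.mpr (by omega))
  have hPa : ∀ a n, P a n = ∑ d ∈ Finset.Icc (-(m : ℤ)) (B : ℤ),
      beta K q m p d (n - d) * a (n - d) := by
    intro a n; rw [hP]; exact P_apply q m B p hB a n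
  -- beta vanishes outside [dmin, dmax]
  have hbz : ∀ d : ℤ, d < dmin ∨ dmax < d → ∀ k, beta K q m p d k = 0 := by
    intro d hd k
    by_contra h
    have hdmem : d ∈ {d : ℤ | ∃ k : ℤ, beta K q m p d k ≠ 0} := ⟨k, h⟩
    rcases hd with h1 | h1
    · exact absurd (hmin.2 hdmem) (by omega)
    · exact absurd (hmax.2 hdmem) (by omega)
  -- beta vanishes outside [-m, B]
  have hbz2 : ∀ d : ℤ, d < -(m : ℤ) ∨ (B : ℤ) < d → ∀ k, beta K q m p d k = 0 := by
    intro d hd k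
    rw [beta]
    apply Finset.sum_eq_zero
    intro j hj
    simp only [Finset.mem_range] at hj
    rcases hd with h1 | h1
    · rw [pCoeff, if_pos (by omega), zero_mul]
    · rw [pCoeff, if_neg (by omega),
        Polynomial.coeff_eq_zero_of_natDegree_lt (by have := hB j (by omega); omega), zero_mul]
  have hdm1 : -(m : ℤ) ≤ dmin := by
    by_contra h
    obtain ⟨k, hk⟩ := hmin.1
    exact hk (hbz2 dmin (by omega) k)
  have hdm2 : dmax ≤ (B : ℤ) := by
    by_contra h
    obtain ⟨k, hk⟩ := hmax.1
    exact hk (hbz2 dmax (by omega) k)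
  have hdmle : dmin ≤ dmax := hmax.2 hmin.1
  set lo : ℤ := min dmin 0 with hlo
  set hi : ℤ := max dmax 0 with hhi
  have hlo0 : lo ≤ 0 := min_le_right _ _
  have hhi0 : 0 ≤ hi := le_max_right _ _
  -- P applied, as sum over Icc lo hi
  have hPa2 : ∀ a n, P a n = ∑ d ∈ Finset.Icc lo hi,
      beta K q m p d (n - d) * a (n - d) := by
    intro a n
    rw [hPa]
    have h1 : Finset.Icc dmin dmax ⊆ Finset.Icc (-(m : ℤ)) (B : ℤ) := by
      intro d hd; simp only [Finset.mem_Icc] at *; omega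
    have h2 : Finset.Icc dmin dmax ⊆ Finset.Icc lo hi := by
      intro d hd; simp only [Finset.mem_Icc] at *
      constructor
      · exact le_trans (min_le_left _ _) hd.1
      · exact le_trans hd.2 (le_max_left _ _)
    rw [← Finset.sum_subset h1, ← Finset.sum_subset h2] <;>
    · intro d hd hnd
      simp only [Finset.mem_Icc, not_and, not_le] at hnd
      simp only [Finset.mem_Icc] at hd
      rcases lt_or_ge d dmin with h | h
      · rw [hbz d (Or.inl h), zero_mul]
      · rw [hbz d (Or.inr (hnd h)), zero_mul]
  set γ : ℤ → ℤ → K := fun d k => beta K q m p d k - (if d = 0 then lam else 0) with hγ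
  -- the kernel equation
  have h0mem : (0 : ℤ) ∈ Finset.Icc lo hi := by simp only [Finset.mem_Icc]; omega
  have hitesum : ∀ a : ℤ → K, ∀ n : ℤ,
      ∑ d ∈ Finset.Icc lo hi, (if d = 0 then lam else 0) * a (n - d) = lam * a n := by
    intro a n
    rw [Finset.sum_eq_single_of_mem 0 h0mem]
    · simp
    · intro d _ hd; rw [if_neg hd, zero_mul]
  have hker : ∀ a ∈ LinearMap.ker (P - lam • (1 : Module.End K (ℤ → K))), ∀ n : ℤ,
      ∑ d ∈ Finset.Icc lo hi, γ d (n - d) * a (n - d) = 0 := by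
    intro a ha n
    have hPan : P a n = lam * a n := by
      have h2 := congrFun (LinearMap.mem_ker.mp ha) n
      simp only [LinearMap.sub_apply, LinearMap.smul_apply, Module.End.one_apply,
        Pi.sub_apply, Pi.smul_apply, smul_eq_mul, Pi.zero_apply, LinearMap.zero_apply] at h2
      linear_combination h2
    have : ∑ d ∈ Finset.Icc lo hi, γ d (n - d) * a (n - d)
        = (∑ d ∈ Finset.Icc lo hi, beta K q m p d (n - d) * a (n - d))
          - ∑ d ∈ Finset.Icc lo hi, (if d = 0 then lam else 0) * a (n - d) := by
      rw [← Finset.sum_sub_distrib]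
      apply Finset.sum_congr rfl
      intro d _
      rw [hγ]; ring
    rw [this, hitesum, ← hPa2, hPan, sub_self]
  -- the set of shifts where γ is not identically zero
  set T : Finset ℤ := (Finset.Icc lo hi).filter (fun d => ∃ k, γ d k ≠ 0) with hT
  have hTsub : T ⊆ Finset.Icc lo hi := Finset.filter_subset _ _
  have hTne : T.Nonempty := by
    rw [Finset.filter_nonempty_iff]
    by_contra hc
    push_neg at hc
    apply hnc lam
    apply LinearMap.ext
    intro a
    funext n
    have h1 : P a n = ∑ d ∈ Finset.Icc lo hi, (if d = 0 then lam else 0) * a (n - d) := by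
      rw [hPa2]
      apply Finset.sum_congr rfl
      intro d hd
      have hzero : γ d (n - d) = 0 := by
        by_contra hne
        exact absurd hne (by simpa using hc d hd (n - d))
      have : beta K q m p d (n - d) = (if d = 0 then lam else 0) := by
        have := hzero
        rw [hγ] at this
        simp only at this
        linear_combination this
      rw [this]
    rw [h1, hitesum]
    simp [LinearMap.smul_apply]
  set dplus : ℤ := T.max' hTne with hdplus
  set dminus : ℤ := T.min' hTne with hdminus
  have hdpm : dminus ≤ dplus := T.min'_le _ (T.max'_mem hTne)
  have hdpmem : dplus ∈ Finset.Icc lo hi := hTsub (T.max'_mem hTne)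
  have hdmmem : dminus ∈ Finset.Icc lo hi := hTsub (T.min'_mem hTne)
  set D : ℤ := dplus - dminus with hD
  have hD0 : 0 ≤ D := by omega
  have hDle : D ≤ hi - lo := by
    simp only [Finset.mem_Icc] at hdpmem hdmmem
    omega
  -- zeros of γ dminus and γ dplus
  have hzb : ∀ d ∈ T, ∃ Z : Finset ℤ, Z.card ≤ m ∧ ∀ k ∉ Z, γ d k ≠ 0 := by
    intro d hd
    have hne : ∃ k, γ d k ≠ 0 := (Finset.mem_filter.mp hd).2
    apply zeros_bound q hq hqi m (fun j => pCoeff K p j d) (if d = 0 then lam else 0) (γ d) _ hne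
    intro k
    simp only [hγ, beta]
  obtain ⟨Zm, hZmcard, hZm⟩ := hzb dminus (T.min'_mem hTne)
  obtain ⟨Zp, hZpcard, hZp⟩ := hzb dplus (T.max'_mem hTne)
  obtain ⟨N₀, hN₀⟩ := Finset.bddAbove Zm
  set N : ℤ := N₀ + 1 with hN
  have hNgood : ∀ k : ℤ, N ≤ k → γ dminus k ≠ 0 := by
    intro k hk
    apply hZm
    intro hmem
    have := hN₀ hmem
    omega
  set S : Finset ℤ := Finset.Icc N (N + D - 1) ∪ Zp with hS
  -- kernel equation restricted to T
  have hkerT : ∀ a ∈ LinearMap.ker (P - lam • (1 : Module.End K (ℤ → K))), ∀ n : ℤ,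
      ∑ d ∈ T, γ d (n - d) * a (n - d) = 0 := by
    intro a ha n
    rw [Finset.sum_subset hTsub]
    · exact hker a ha n
    · intro d hd hnd
      have : γ d (n - d) = 0 := by
        by_contra hne
        exact hnd (Finset.mem_filter.mpr ⟨hd, ⟨n - d, hne⟩⟩)
      rw [this, zero_mul]
  -- upward recurrence step
  have hup : ∀ a ∈ LinearMap.ker (P - lam • (1 : Module.End K (ℤ → K))), ∀ k : ℤ,
      γ dminus k ≠ 0 → (∀ s : ℤ, 1 ≤ s → s ≤ D → a (k - s) = 0) → a k = 0 := by
    intro a ha k hγk hbelow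
    have heq := hkerT a ha (k + dminus)
    rw [← Finset.add_sum_erase _ _ (T.min'_mem hTne)] at heq
    have hrest : ∑ d ∈ T.erase dminus, γ d (k + dminus - d) * a (k + dminus - d) = 0 := by
      apply Finset.sum_eq_zero
      intro d hd
      have hdT := Finset.mem_of_mem_erase hd
      have hdne := Finset.ne_of_mem_erase hd
      have h1 : dminus < d := lt_of_le_of_ne (T.min'_le _ hdT) (Ne.symm hdne)
      have h2 : d ≤ dplus := T.le_max' _ hdT
      have : k + dminus - d = k - (d - dminus) := by ring
      rw [this, hbelow (d - dminus) (by omega) (by omega), mul_zero]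
    rw [hrest, add_zero] at heq
    have : k + dminus - dminus = k := by ring
    rw [this] at heq
    exact (mul_eq_zero.mp heq).resolve_left hγk
  -- downward recurrence step
  have hdown : ∀ a ∈ LinearMap.ker (P - lam • (1 : Module.End K (ℤ → K))), ∀ k : ℤ,
      γ dplus k ≠ 0 → (∀ s : ℤ, 1 ≤ s → s ≤ D → a (k + s) = 0) → a k = 0 := by
    intro a ha k hγk habove
    have heq := hkerT a ha (k + dplus)
    rw [← Finset.add_sum_erase _ _ (T.max'_mem hTne)] at heq
    have hrest : ∑ d ∈ T.erase dplus, γ d (k + dplus - d) * a (k + dplus - d) = 0 := by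
      apply Finset.sum_eq_zero
      intro d hd
      have hdT := Finset.mem_of_mem_erase hd
      have hdne := Finset.ne_of_mem_erase hd
      have h1 : d < dplus := lt_of_le_of_ne (T.le_max' _ hdT) hdne
      have h2 : dminus ≤ d := T.min'_le _ hdT
      have : k + dplus - d = k + (dplus - d) := by ring
      rw [this, habove (dplus - d) (by omega) (by omega), mul_zero]
    rw [hrest, add_zero] at heq
    have : k + dplus - dplus = k := by ring
    rw [this] at heq
    exact (mul_eq_zero.mp heq).resolve_left hγk
  -- vanishing on S forces vanishing everywhere
  have hvanish : ∀ a : ℤ → K,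
      a ∈ LinearMap.ker (P - lam • (1 : Module.End K (ℤ → K))) →
      (∀ s ∈ S, a s = 0) → a = 0 := by
    intro a ha hzS
    -- step 1: vanishing above N
    have hstep1 : ∀ t : ℕ, ∀ k : ℤ, N ≤ k → k < N + t → a k = 0 := by
      intro t
      induction t with
      | zero => intro k h1 h2; omega
      | succ t ih =>
        intro k h1 h2
        rcases lt_or_ge k (N + t) with h | h
        · exact ih k h1 h
        · have hk : k = N + t := by omega
          rcases le_or_gt k (N + D - 1) with hw | hw
          · exact hzS k (Finset.mem_union_left _ (Finset.mem_Icc.mpr ⟨h1, hw⟩))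
          · apply hup a ha k (hNgood k h1)
            intro s hs1 hs2
            apply ih
            · omega
            · omega
    have habove : ∀ k : ℤ, N ≤ k → a k = 0 := by
      intro k hk
      exact hstep1 ((k - N).toNat + 1) k hk (by omega)
    -- step 2: downward
    have hstep2 : ∀ t : ℕ, ∀ k : ℤ, N - t ≤ k → a k = 0 := by
      intro t
      induction t with
      | zero => intro k h1; exact habove k (by omega)
      | succ t ih =>
        intro k h1
        rcases le_or_gt (N - t) k with h | h
        · exact ih k h
        · by_cases hkZ : k ∈ Zp
          · exact hzS k (Finset.mem_union_right _ hkZ)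
          · apply hdown a ha k (hZp k hkZ)
            intro s hs1 hs2
            apply ih
            omega
    funext k
    have : a k = 0 := hstep2 (N - k).toNat k (by omega)
    exact this
  obtain ⟨hfd, hrank⟩ := finrank_le_card (LinearMap.ker (P - lam • (1 : Module.End K (ℤ → K)))) S hvanish
  refine ⟨hfd, ?_⟩
  have hcardS : (S.card : ℤ) ≤ D + m := by
    calc (S.card : ℤ) ≤ ((Finset.Icc N (N + D - 1)).card : ℤ) + (Zp.card : ℤ) := by
          exact_mod_cast Nat.cast_le.mpr (Finset.card_union_le _ _)
      _ ≤ D + m := by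
          rw [Int.card_Icc]
          have : (N + D - 1 + 1 - N).toNat = D.toNat := by omega
          rw [this]
          have : ((D.toNat : ℕ) : ℤ) = D := by omega
          rw [this]
          omega
  have habs1 : hi ≤ |dmax| := max_le (le_abs_self _) (abs_nonneg _)
  have habs2 : -|dmin| ≤ lo := le_min (neg_abs_le _) (by simpa using abs_nonneg dmin)
  calc (Module.finrank K (LinearMap.ker (P - lam • (1 : Module.End K (ℤ → K)))) : ℤ)
      ≤ (S.card : ℤ) := by exact_mod_cast hrank
    _ ≤ D + m := hcardS
    _ ≤ (hi - lo) + m := by omega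
    _ ≤ |dmax| + |dmin| + m := by linarith
end
end

section
/- Let p_0,…,p_m ∈ K[X], not all zero, and let P = Σ_{j=0}^m p_j(M) D_q^j. For d ∈ ℤ the following are equivalent: (1) the homogeneous degree d occurs in P; (2) β_d is not identically zero on ℤ; (3) β_d has only finitely many zeroes in ℤ. Moreover, if d occurs in P but not with a differentiation, then β_d is the nonzero constant function with value p_{0,d}; and if d occurs in P with a differentiation, then β_d has at most m zeroes in ℤ and the range {β_d(k) : k ∈ ℤ} is (countably) infinite. -/
/-!
Writing `{k - i}_q = q^{-i} {k}_q + {-i}_q`, the function `β_d` becomes `k ↦ F({k}_q)` for a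
polynomial `F = Σ_j p_{j,j+d} Φ_j`, where `Φ_j = ∏_{i<j} (q^{-i} X + {-i}_q)` has degree exactly
`j`. Hence `F` is nonzero iff `d` occurs, and its degree is at least `1` iff `d` occurs with a
differentiation. Since `k ↦ {k}_q` is injective (this is the standing assumption
`{n}_q ≠ 0` for `n ≠ 0`), the zeroes of `β_d` inject into the at most `deg F ≤ m` roots of `F`,
and when `deg F ≥ 1` every value of `β_d` is taken only finitely often, so the range is infinite.
-/

open Polynomial
open scoped Classical

noncomputable section

open Function

namespace Polynomial

variable {R ι : Type*} [CommRing R]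

theorem natDegree_sum_C_mul_le {P : ℕ → R[X]} (hP : ∀ j, (P j).degree = j) (c : ℕ → R)
    (m : ℕ) : (∑ i ∈ Finset.range (m + 1), C (c i) * P i).natDegree ≤ m :=
  natDegree_sum_le_of_forall_le _ _ fun i hi =>
    (natDegree_C_mul_le _ _).trans
      ((natDegree_eq_of_degree_eq_some (hP i)).le.trans (Finset.mem_range_succ_iff.mp hi))

variable [IsDomain R] {F : R[X]} {f : ι → R}

theorem finite_setOf_eval_comp_eq_zero (hF : F ≠ 0) (hf : Injective f) :
    {i | F.eval (f i) = 0}.Finite :=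
  (finite_setOfPred_isRoot hF).preimage hf.injOn

theorem ncard_setOf_eval_comp_eq_zero_le (hF : F ≠ 0) (hf : Injective f) :
    {i | F.eval (f i) = 0}.ncard ≤ F.natDegree :=
  calc {i | F.eval (f i) = 0}.ncard ≤ (F.roots.toFinset : Set R).ncard :=
        Set.ncard_le_ncard_of_injOn f (fun i hi => by simpa [mem_roots hF] using hi) hf.injOn
    _ ≤ F.natDegree := by
        rw [Set.ncard_coe_finset]
        exact (Multiset.toFinset_card_le _).trans F.card_roots'

theorem infinite_range_eval_comp [Infinite ι] (hF : 0 < F.natDegree) (hf : Injective f) :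
    (Set.range fun i => F.eval (f i)).Infinite := by
  intro hfin
  refine Set.infinite_univ (α := ι) ?_
  rw [← Set.preimage_range]
  refine hfin.preimage' fun v _ => ?_
  have hFv : F - C v ≠ 0 := fun h => by simp [sub_eq_zero.mp h] at hF
  simpa [Set.preimage, sub_eq_zero] using finite_setOf_eval_comp_eq_zero hFv hf

theorem le_degree_sum_C_mul {P : ℕ → R[X]} (hP : ∀ j, (P j).degree = j) {s : Finset ℕ}
    {c : ℕ → R} {j : ℕ} (hj : j ∈ s) (hc : c j ≠ 0) :
    (j : WithBot ℕ) ≤ (∑ i ∈ s, C (c i) * P i).degree := by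
  have hdeg : ∀ i, c i ≠ 0 → (C (c i) * P i).degree = i := fun i hi => by
    rw [degree_C_mul hi, hP]
  rw [degree_sum_eq_of_disjoint]
  · exact (hdeg j hc).symm.le.trans (Finset.le_sup (f := fun i => (C (c i) * P i).degree) hj)
  · rintro i ⟨-, hi⟩ i' ⟨-, hi'⟩ hne
    have hci : c i ≠ 0 := fun h => hi (by simp [h])
    have hci' : c i' ≠ 0 := fun h => hi' (by simp [h])
    simpa [hdeg i hci, hdeg i' hci'] using hne

end Polynomial

section QInteger

variable {K : Type*} [Field K] {q : K}

theorem qInt_add (hq : q ≠ 0) (a b : ℤ) :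
    qInt K q (a + b) = q ^ b * qInt K q a + qInt K q b := by
  unfold qInt
  split_ifs with h1
  · simp [h1]
  · rw [zpow_add₀ hq]
    field_simp [sub_ne_zero.mpr h1]
    ring

theorem qInt_injective (hq : q ≠ 0) (hqi : ∀ n : ℤ, n ≠ 0 → qInt K q n ≠ 0) :
    Injective (qInt K q) := by
  intro k k' h
  by_contra hne
  have hadd := qInt_add hq (k - k') k'
  rw [sub_add_cancel, h, right_eq_add, mul_eq_zero] at hadd
  exact hadd.elim (zpow_ne_zero _ hq) (hqi _ (sub_ne_zero.mpr hne))

variable (K q) in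
def qDescPochhammer (j : ℕ) : K[X] :=
  ∏ i ∈ Finset.range j, (C (q ^ (-(i : ℤ))) * X + C (qInt K q (-i)))

theorem eval_qDescPochhammer (hq : q ≠ 0) (j : ℕ) (k : ℤ) :
    (qDescPochhammer K q j).eval (qInt K q k) = ∏ i ∈ Finset.range j, qInt K q (k - i) := by
  simp [qDescPochhammer, eval_prod, sub_eq_add_neg, qInt_add hq k]

theorem degree_qDescPochhammer (hq : q ≠ 0) (j : ℕ) : (qDescPochhammer K q j).degree = j := by
  simp [qDescPochhammer, degree_prod, degree_linear (inv_ne_zero (pow_ne_zero _ hq))]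

end QInteger

section Beta

variable {K : Type*} [Field K] {q : K} {m : ℕ} {p : ℕ → K[X]} {d : ℤ}

variable (K q m p d) in
def betaPoly : K[X] :=
  ∑ j ∈ Finset.range (m + 1), C (pCoeff K p j d) * qDescPochhammer K q j

theorem beta_eq_eval_betaPoly (hq : q ≠ 0) (k : ℤ) :
    beta K q m p d k = (betaPoly K q m p d).eval (qInt K q k) := by
  simp [beta, betaPoly, eval_finsetSum, eval_qDescPochhammer hq]

theorem coe_le_degree_betaPoly (hq : q ≠ 0) {j : ℕ} (hjm : j ≤ m) (hj : pCoeff K p j d ≠ 0) :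
    (j : WithBot ℕ) ≤ (betaPoly K q m p d).degree :=
  le_degree_sum_C_mul (c := fun j => pCoeff K p j d) (degree_qDescPochhammer hq)
    (Finset.mem_range_succ_iff.mpr hjm) hj

theorem betaPoly_ne_zero (hq : q ≠ 0) (h : ∃ j ≤ m, pCoeff K p j d ≠ 0) :
    betaPoly K q m p d ≠ 0 := by
  obtain ⟨j, hjm, hj⟩ := h
  intro h0
  simpa [h0] using coe_le_degree_betaPoly hq hjm hj

theorem natDegree_betaPoly_le (hq : q ≠ 0) : (betaPoly K q m p d).natDegree ≤ m :=
  natDegree_sum_C_mul_le (degree_qDescPochhammer hq) _ m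

theorem natDegree_betaPoly_pos (hq : q ≠ 0) (h : ∃ j, 1 ≤ j ∧ j ≤ m ∧ pCoeff K p j d ≠ 0) :
    0 < (betaPoly K q m p d).natDegree := by
  obtain ⟨j, hj1, hjm, hj⟩ := h
  exact hj1.trans (le_natDegree_of_coe_le_degree (coe_le_degree_betaPoly hq hjm hj))

theorem beta_eq_pCoeff_zero (h : ∀ j, 1 ≤ j → j ≤ m → pCoeff K p j d = 0) (k : ℤ) :
    beta K q m p d k = pCoeff K p 0 d := by
  rw [beta, Finset.sum_eq_single 0 (fun j hj hj0 => ?_) (by simp)]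
  · simp
  · rw [h j (Nat.one_le_iff_ne_zero.mpr hj0) (Finset.mem_range_succ_iff.mp hj), zero_mul]

end Beta

theorem beta_trichotomy_general (K : Type*) [Field K] (q : K) (hq : q ≠ 0)
    (hqi : ∀ n : ℤ, n ≠ 0 → qInt K q n ≠ 0)
    (m : ℕ) (p : ℕ → K[X]) (d : ℤ) :
    ((∃ j ≤ m, pCoeff K p j d ≠ 0) ↔ (∃ k : ℤ, beta K q m p d k ≠ 0)) ∧
    ((∃ k : ℤ, beta K q m p d k ≠ 0) ↔ {k : ℤ | beta K q m p d k = 0}.Finite) ∧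
    ((∃ j ≤ m, pCoeff K p j d ≠ 0) ∧ ¬ (∃ j, 1 ≤ j ∧ j ≤ m ∧ pCoeff K p j d ≠ 0) →
      pCoeff K p 0 d ≠ 0 ∧ ∀ k : ℤ, beta K q m p d k = pCoeff K p 0 d) ∧
    ((∃ j, 1 ≤ j ∧ j ≤ m ∧ pCoeff K p j d ≠ 0) →
      {k : ℤ | beta K q m p d k = 0}.ncard ≤ m ∧
      (Set.range (beta K q m p d)).Infinite) := by
  have hinj := qInt_injective hq hqi
  have hβ : beta K q m p d = fun k => (betaPoly K q m p d).eval (qInt K q k) :=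
    funext (beta_eq_eval_betaPoly hq)
  by_cases hocc : ∃ j ≤ m, pCoeff K p j d ≠ 0
  · have hF := betaPoly_ne_zero hq hocc
    have hfin : {k | beta K q m p d k = 0}.Finite := hβ ▸ finite_setOf_eval_comp_eq_zero hF hinj
    have hne : ∃ k, beta K q m p d k ≠ 0 := hfin.exists_notMem
    refine ⟨iff_of_true hocc hne, iff_of_true hne hfin, fun ⟨_, hnd⟩ => ?_, fun hdiff => ?_⟩
    · push Not at hnd
      obtain ⟨j, hjm, hj⟩ := hocc
      obtain rfl : j = 0 := by_contra fun hj0 => hj (hnd j (Nat.one_le_iff_ne_zero.mpr hj0) hjm)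
      exact ⟨hj, beta_eq_pCoeff_zero hnd⟩
    · rw [hβ]
      exact ⟨(ncard_setOf_eval_comp_eq_zero_le hF hinj).trans (natDegree_betaPoly_le hq),
        infinite_range_eval_comp (natDegree_betaPoly_pos hq hdiff) hinj⟩
  · have hc : ∀ j ≤ m, pCoeff K p j d = 0 := by simpa using hocc
    have hzero : ∀ k, beta K q m p d k = 0 := fun k =>
      (beta_eq_pCoeff_zero (fun j _ hjm => hc j hjm) k).trans (hc 0 m.zero_le)
    have hall : ¬ ∃ k, beta K q m p d k ≠ 0 := by simpa using hzero
    have hinf : ¬ {k | beta K q m p d k = 0}.Finite := by simpa [hzero] using Set.infinite_univ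
    exact ⟨iff_of_false hocc hall, iff_of_false hall hinf, fun h => absurd h.1 hocc,
      fun ⟨j, _, hjm, hj⟩ => absurd ⟨j, hjm, hj⟩ hocc⟩

/-- for `P = Σ_{j=0}^m p_j(M) D_q^j ≠ 0` and `d ∈ ℤ`, the following are
equivalent: (1) the homogeneous degree `d` occurs in `P`; (2) `β_d ≢ 0`; (3) `β_d` has
finitely many zeroes. Moreover, if `d` occurs but not with a differentiation then `β_d` is
the nonzero constant `p_{0,d}`, and if `d` occurs with a differentiation then `β_d` has at
most `m` zeroes and infinite range. -/
theorem beta_trichotomy (K : Type*) [Field K] (q : K) (hq : q ≠ 0)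
    (hqi : ∀ n : ℤ, n ≠ 0 → qInt K q n ≠ 0)
    (m : ℕ) (p : ℕ → K[X]) (hp : ∃ j ≤ m, p j ≠ 0) (d : ℤ) :
    ((∃ j ≤ m, pCoeff K p j d ≠ 0) ↔ (∃ k : ℤ, beta K q m p d k ≠ 0)) ∧
    ((∃ k : ℤ, beta K q m p d k ≠ 0) ↔ {k : ℤ | beta K q m p d k = 0}.Finite) ∧
    ((∃ j ≤ m, pCoeff K p j d ≠ 0) ∧ ¬ (∃ j, 1 ≤ j ∧ j ≤ m ∧ pCoeff K p j d ≠ 0) →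
      pCoeff K p 0 d ≠ 0 ∧ ∀ k : ℤ, beta K q m p d k = pCoeff K p 0 d) ∧
    ((∃ j, 1 ≤ j ∧ j ≤ m ∧ pCoeff K p j d ≠ 0) →
      {k : ℤ | beta K q m p d k = 0}.ncard ≤ m ∧
      (Set.range (beta K q m p d)).Infinite) :=
  beta_trichotomy_general K q hq hqi m p d
end
end

section
/- Assume in addition that K is algebraically closed, and let p ∈ K[X] be nonzero. Then the endomorphism p(M) : L → L is surjective, and dim_K ker(p(M)) equals the sum of the multiplicities of the nonzero roots of p (i.e., if p(X) = c X^{e_0} ∏_{i=1}^r (X − α_i)^{e_i} with c ≠ 0 and α_1,…,α_r distinct nonzero elements of K, then dim_K ker(p(M)) = Σ_{i=1}^r e_i). -/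
open Polynomial
open scoped Classical

noncomputable section

/-!
`p(M) = c M^{e₀} ∏ (M - αᵢ)^{eᵢ}`. The factor `c M^{e₀}` is invertible because `M` is a shift.
For `α ≠ 0`, `M - α` is surjective, since `a(n-1) - α a(n) = b(n)` can be solved recursively
upwards and downwards from `a(0) = 0`, and its kernel is the line spanned by `n ↦ α⁻ⁿ`. Finally,
when `g` is surjective, `g` maps `ker (f g)` onto `ker f` with kernel `ker g`, so kernel dimensions
add up along the factorization. Working with the cardinal `Module.rank` lets them add up before
anything is known to be finite-dimensional.
-/

section RankKer

variable {K V : Type*} [DivisionRing K] [AddCommGroup V] [Module K V]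

theorem rank_ker_mul_of_surjective {f g : Module.End K V} (hg : Function.Surjective g) :
    Module.rank K (LinearMap.ker (f * g)) =
      Module.rank K (LinearMap.ker f) + Module.rank K (LinearMap.ker g) := by
  have hmem : ∀ x ∈ LinearMap.ker (f * g), g x ∈ LinearMap.ker f := fun x hx => hx
  have hle : LinearMap.ker g ≤ LinearMap.ker (f * g) := fun x hx => by
    simp [LinearMap.mem_ker.mp hx]
  have hsurj : Function.Surjective (g.restrict hmem) := by
    rintro ⟨y, hy⟩
    obtain ⟨x, rfl⟩ := hg y
    exact ⟨⟨x, hy⟩, rfl⟩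
  rw [LinearMap.rank_eq_of_surjective hsurj, LinearMap.ker_restrict,
    (Submodule.comapSubtypeEquivOfLe hle).rank_eq]

end RankKer

section Aeval

variable {K V : Type*} [Field K] [AddCommGroup V] [Module K V] (f : Module.End K V)

theorem surjective_aeval_mul {p q : K[X]} (hp : Function.Surjective (aeval f p))
    (hq : Function.Surjective (aeval f q)) : Function.Surjective (aeval f (p * q)) := by
  rw [map_mul, Module.End.mul_eq_comp, LinearMap.coe_comp]
  exact hp.comp hq

theorem rank_ker_aeval_mul (p : K[X]) {q : K[X]} (hq : Function.Surjective (aeval f q)) :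
    Module.rank K (LinearMap.ker (aeval f (p * q))) =
      Module.rank K (LinearMap.ker (aeval f p)) + Module.rank K (LinearMap.ker (aeval f q)) := by
  rw [map_mul, rank_ker_mul_of_surjective hq]

variable {ι : Type*} (s : Finset ι) {P : ι → K[X]}

theorem surjective_aeval_prod (h : ∀ i ∈ s, Function.Surjective (aeval f (P i))) :
    Function.Surjective (aeval f (∏ i ∈ s, P i)) := by
  induction s using Finset.induction_on with
  | empty =>
    rw [Finset.prod_empty, map_one, Module.End.coe_one]
    exact Function.surjective_id
  | insert a s ha ih =>
    rw [Finset.prod_insert ha]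
    exact surjective_aeval_mul f (h a (s.mem_insert_self a))
      (ih fun i hi => h i (Finset.mem_insert_of_mem hi))

theorem rank_ker_aeval_prod (h : ∀ i ∈ s, Function.Surjective (aeval f (P i))) :
    Module.rank K (LinearMap.ker (aeval f (∏ i ∈ s, P i))) =
      ∑ i ∈ s, Module.rank K (LinearMap.ker (aeval f (P i))) := by
  induction s using Finset.induction_on with
  | empty =>
    rw [Finset.prod_empty, map_one, Module.End.one_eq_id, LinearMap.ker_id, rank_bot,
      Finset.sum_empty]
  | insert a s ha ih =>
    have hs : ∀ i ∈ s, Function.Surjective (aeval f (P i)) :=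
      fun i hi => h i (Finset.mem_insert_of_mem hi)
    rw [Finset.prod_insert ha, Finset.sum_insert ha,
      rank_ker_aeval_mul f _ (surjective_aeval_prod f s hs), ih hs]

variable {p : K[X]}

theorem surjective_aeval_pow (hp : Function.Surjective (aeval f p)) (k : ℕ) :
    Function.Surjective (aeval f (p ^ k)) := by
  have := surjective_aeval_prod f (Finset.range k) (P := fun _ => p) (fun _ _ => hp)
  rwa [Finset.prod_const, Finset.card_range] at this

theorem rank_ker_aeval_pow (hp : Function.Surjective (aeval f p)) (k : ℕ) :
    Module.rank K (LinearMap.ker (aeval f (p ^ k))) =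
      k * Module.rank K (LinearMap.ker (aeval f p)) := by
  have := rank_ker_aeval_prod f (Finset.range k) (P := fun _ => p) (fun _ _ => hp)
  rwa [Finset.prod_const, Finset.sum_const, Finset.card_range, nsmul_eq_mul] at this

end Aeval

section Shift

variable {K : Type*} [Field K]

theorem bijective_Mop : Function.Bijective (Mop K) := by
  refine ⟨fun a b h => funext fun n => ?_, fun b => ⟨fun n => b (n + 1), funext fun n => ?_⟩⟩
  · simpa [Mop] using congrFun h (n + 1)
  · simp [Mop]

theorem bijective_aeval_Mop_C_mul_X_pow {c : K} (hc : c ≠ 0) (k : ℕ) :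
    Function.Bijective (aeval (Mop K) (C c * X ^ k)) := by
  rw [← Module.End.isUnit_iff, map_mul, map_pow, aeval_C, aeval_X]
  exact (hc.isUnit.map _).mul (((Module.End.isUnit_iff _).mpr bijective_Mop).pow k)

theorem aeval_Mop_X_sub_C_apply (α : K) (a : ℤ → K) (n : ℤ) :
    aeval (Mop K) (X - C α) a n = a (n - 1) - α * a n := by
  simp [Mop, Module.algebraMap_end_apply]

theorem surjective_aeval_Mop_X_sub_C {α : K} (hα : α ≠ 0) :
    Function.Surjective (aeval (Mop K) (X - C α)) := by
  intro b
  let a : ℤ → K := fun n => n.inductionOn' 0 (motive := fun _ => K) 0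
    (fun k _ x => α⁻¹ * (x - b (k + 1))) (fun k _ x => b k + α * x)
  refine ⟨a, funext fun n => ?_⟩
  rw [aeval_Mop_X_sub_C_apply]
  rcases le_or_gt n 0 with hn | hn
  · rw [show a (n - 1) = b n + α * a n from Int.inductionOn'_sub_one hn]
    ring
  · obtain ⟨k, rfl⟩ : ∃ k, n = k + 1 := ⟨n - 1, by ring⟩
    rw [show a (k + 1) = α⁻¹ * (a k - b (k + 1)) from Int.inductionOn'_add_one (by omega),
      add_sub_cancel_right]
    field_simp
    ring

theorem ker_aeval_Mop_X_sub_C {α : K} (hα : α ≠ 0) :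
    LinearMap.ker (aeval (Mop K) (X - C α)) = K ∙ fun n => α ^ (-n) := by
  apply le_antisymm
  · intro a ha
    have hrec (n : ℤ) : a (n - 1) = α * a n := by
      have := congrFun (LinearMap.mem_ker.mp ha) n
      rwa [aeval_Mop_X_sub_C_apply, Pi.zero_apply, sub_eq_zero] at this
    have hper : Function.Periodic (fun n : ℤ => a n * α ^ n) 1 := fun n => by
      have h := hrec (n + 1)
      rw [add_sub_cancel_right] at h
      simp only [h, zpow_add_one₀ hα]
      ring
    refine Submodule.mem_span_singleton.mpr ⟨a 0, funext fun n => ?_⟩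
    have h := hper.int_mul_eq n
    simp only [Int.cast_id, mul_one, zpow_zero] at h
    rw [Pi.smul_apply, smul_eq_mul, ← h, zpow_neg, mul_inv_cancel_right₀ (zpow_ne_zero n hα)]
  · rw [Submodule.span_le, Set.singleton_subset_iff, SetLike.mem_coe, LinearMap.mem_ker]
    funext n
    rw [aeval_Mop_X_sub_C_apply, show -(n - 1) = -n + 1 by ring, zpow_add_one₀ hα,
      Pi.zero_apply]
    ring

theorem rank_ker_aeval_Mop_X_sub_C {α : K} (hα : α ≠ 0) :
    Module.rank K (LinearMap.ker (aeval (Mop K) (X - C α))) = 1 := by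
  have hv : (fun n : ℤ => α ^ (-n)) ≠ 0 := fun h => by simpa using congrFun h 0
  rw [ker_aeval_Mop_X_sub_C hα, ← Module.finrank_eq_rank, finrank_span_singleton hv, Nat.cast_one]

end Shift

theorem surjective_and_dim_ker_pM_general (K : Type*) [Field K]
    (c : K) (hc : c ≠ 0) (e0 : ℕ) (r : ℕ)
    (α : Fin r → K) (hα0 : ∀ i, α i ≠ 0)
    (e : Fin r → ℕ)
    (p : K[X]) (hp : p = C c * X ^ e0 * ∏ i, (X - C (α i)) ^ e i) :
    Function.Surjective ⇑(aeval (Mop K) p) ∧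
    FiniteDimensional K (LinearMap.ker (aeval (Mop K) p)) ∧
    Module.finrank K (LinearMap.ker (aeval (Mop K) p)) = ∑ i, e i := by
  subst hp
  have hfactors : ∀ i ∈ Finset.univ, Function.Surjective (aeval (Mop K) ((X - C (α i)) ^ e i)) :=
    fun i _ => surjective_aeval_pow (Mop K) (surjective_aeval_Mop_X_sub_C (hα0 i)) (e i)
  have hunit := bijective_aeval_Mop_C_mul_X_pow hc e0
  have hfactor_rank (i : Fin r) :
      Module.rank K (LinearMap.ker (aeval (Mop K) ((X - C (α i)) ^ e i))) = e i := by
    rw [rank_ker_aeval_pow (Mop K) (surjective_aeval_Mop_X_sub_C (hα0 i)),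
      rank_ker_aeval_Mop_X_sub_C (hα0 i), mul_one]
  have hrank : Module.rank K
      (LinearMap.ker (aeval (Mop K) (C c * X ^ e0 * ∏ i, (X - C (α i)) ^ e i))) =
        ((∑ i, e i : ℕ) : Cardinal) := by
    rw [rank_ker_aeval_mul (Mop K) _ (surjective_aeval_prod (Mop K) _ hfactors),
      rank_ker_aeval_prod (Mop K) _ hfactors, LinearMap.ker_eq_bot_of_injective hunit.injective,
      rank_bot, zero_add, Nat.cast_sum]
    exact Finset.sum_congr rfl fun i _ => hfactor_rank i
  exact ⟨surjective_aeval_mul _ hunit.surjective (surjective_aeval_prod _ _ hfactors),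
    .of_rank_eq_nat hrank, Module.finrank_eq_of_rank_eq hrank⟩

/-- for `K` algebraically closed and `p ≠ 0` with factorization
`p(X) = c X^{e_0} ∏_{i=1}^r (X − α_i)^{e_i}` (`c ≠ 0`, the `α_i` distinct and nonzero),
`p(M)` is surjective and `dim_K ker p(M) = Σ_{i=1}^r e_i`. -/
theorem surjective_and_dim_ker_pM (K : Type*) [Field K] [IsAlgClosed K] (q : K) (hq : q ≠ 0)
    (hqi : ∀ n : ℤ, n ≠ 0 → qInt K q n ≠ 0)
    (c : K) (hc : c ≠ 0) (e0 : ℕ) (r : ℕ)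
    (α : Fin r → K) (hα0 : ∀ i, α i ≠ 0) (hinj : Function.Injective α)
    (e : Fin r → ℕ) (he : ∀ i, 1 ≤ e i)
    (p : K[X]) (hp : p = C c * X ^ e0 * ∏ i, (X - C (α i)) ^ e i) :
    Function.Surjective ⇑(aeval (Mop K) p) ∧
    FiniteDimensional K (LinearMap.ker (aeval (Mop K) p)) ∧
    Module.finrank K (LinearMap.ker (aeval (Mop K) p)) = ∑ i, e i :=
  surjective_and_dim_ker_pM_general K c hc e0 r α hα0 e p hp
end
end

section
/- Assume in addition that K is algebraically closed. Let p(X) = c X^{e_0} ∏_{i=1}^r (X − α_i)^{e_i} with c ≠ 0 and α_1,…,α_r distinct nonzero elements of K, e_i ≥ 1 for i ≥ 1. For each i, let (Ψ_{α_i,s})_{s≥1} be a Jordan chain at α_i. Then the family {Ψ_{α_i,k} : 1 ≤ i ≤ r, 1 ≤ k ≤ e_i} is a K-basis of ker(p(M)). -/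
open Polynomial
open scoped Classical

noncomputable section

/-- The element `Ψ_{α,1} ∈ L`, `Ψ_{α,1}(n) = α^{-n}`. -/
def Psi1 (K : Type*) [Field K] (α : K) : ℤ → K := fun n => α ^ (-n)

/-- A Jordan chain at `α`: a sequence `(Ψ_{α,s})_{s ≥ 1}` with first term `Ψ_{α,1}`
and `(M - α·id) Ψ_{α,s} = Ψ_{α,s-1}` for `s ≥ 2`. -/
def IsJordanChain (K : Type*) [Field K] (α : K) (Ψ : ℕ → ℤ → K) : Prop :=
  Ψ 1 = Psi1 K α ∧ ∀ s : ℕ, 2 ≤ s → Mop K (Ψ s) - α • Ψ s = Ψ (s - 1)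

/-! The shift `M` is invertible, so the factor `c X^{e₀}` does not change the kernel, and the
pairwise coprime factors `(X - αᵢ)^{eᵢ}` split `ker p(M)` into the sum of the kernels of
`(M - αᵢ)^{eᵢ}`. A solution of `a(n-1) = α a(n)` is determined by `a 0`, so `ker (M - α)` is the
line through `Ψ_{α,1}`; climbing a Jordan chain then shows that `Ψ_{α,1}, …, Ψ_{α,k}` is a basis
of `ker (M - α)^k`. These kernels lie in the generalized eigenspaces of `M` for distinct
eigenvalues, which are independent, so the union of the chains stays linearly independent. -/

open Function LinearMap Submodule Module.End Set

section Chain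

variable {R V : Type*} [Ring R] [AddCommGroup V] [Module R V] {f : Module.End R V} {w : ℕ → V}

theorem pow_apply_add_of_chain (hw : ∀ j, f (w (j + 1)) = w j) :
    ∀ i j : ℕ, (f ^ i) (w (j + i)) = w j
  | 0, j => rfl
  | i + 1, j => by
    rw [pow_succ, mul_apply, ← add_assoc, hw, pow_apply_add_of_chain hw i j]

theorem chain_mem_ker_pow (hw : ∀ j, f (w (j + 1)) = w j) (h0 : f (w 0) = 0) {j k : ℕ}
    (hjk : j < k) : w j ∈ ker (f ^ k) := by
  obtain ⟨d, rfl⟩ : ∃ d, k = d + 1 + j := ⟨k - 1 - j, by omega⟩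
  have hj := pow_apply_add_of_chain hw j 0
  rw [zero_add] at hj
  rw [mem_ker, pow_add, mul_apply, hj, pow_succ, mul_apply, h0, map_zero]

theorem span_chain_le_ker_pow (hw : ∀ j, f (w (j + 1)) = w j) (h0 : f (w 0) = 0) (k : ℕ) :
    span R (range fun j : Fin k => w j) ≤ ker (f ^ k) :=
  span_le.2 <| range_subset_iff.2 fun j => chain_mem_ker_pow hw h0 j.isLt

theorem ker_pow_eq_span_chain (hw : ∀ j, f (w (j + 1)) = w j) (hker : ker f = span R {w 0}) :
    ∀ k : ℕ, ker (f ^ k) = span R (range fun j : Fin k => w j)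
  | 0 => by simp [ker_eq_bot', one_apply]
  | k + 1 => by
    have h0 : f (w 0) = 0 := by rw [← mem_ker, hker]; exact mem_span_singleton_self _
    refine le_antisymm (fun x hx => ?_) (span_chain_le_ker_pow hw h0 _)
    have hfx : f x ∈ ker (f ^ k) := by rwa [mem_ker, ← mul_apply, ← pow_succ]
    rw [ker_pow_eq_span_chain hw hker k, mem_span_range_iff_exists_fun] at hfx
    obtain ⟨c, hc⟩ := hfx
    have hrest : x - ∑ j : Fin k, c j • w (j + 1) ∈ span R {w 0} := by
      simp [← hker, map_sum, hw, hc]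
    obtain ⟨d, hd⟩ := mem_span_singleton.1 hrest
    rw [mem_span_range_iff_exists_fun]
    refine ⟨Fin.cons d c, ?_⟩
    simp [Fin.sum_univ_succ, hd]

end Chain

theorem linearIndependent_chain {K V : Type*} [DivisionRing K] [AddCommGroup V] [Module K V]
    {f : Module.End K V} {w : ℕ → V} (hw : ∀ j, f (w (j + 1)) = w j) (h0 : f (w 0) = 0)
    (hw0 : w 0 ≠ 0) : ∀ k : ℕ, LinearIndependent K fun j : Fin k => w j
  | 0 => linearIndependent_empty_type
  | k + 1 => by
    refine linearIndependent_finSucc'.2 ⟨linearIndependent_chain hw h0 hw0 k, fun hk => hw0 ?_⟩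
    rw [← pow_apply_add_of_chain hw k 0, zero_add]
    exact span_chain_le_ker_pow hw h0 k hk

section LaurentShift

variable {K : Type*} [Field K]

theorem mop_pow_apply (k : ℕ) (a : ℤ → K) (n : ℤ) : (Mop K ^ k) a n = a (n - k) := by
  induction k generalizing a n with
  | zero => simp
  | succ k ih =>
    rw [pow_succ, mul_apply, ih, Nat.cast_succ, sub_add_eq_sub_sub]
    rfl

theorem isUnit_mop : IsUnit (Mop K) :=
  (Module.End.isUnit_iff _).2
    ⟨fun a b h => funext fun n => by simpa [Mop] using congrFun h (n + 1),
      fun a => ⟨fun n => a (n + 1), funext fun n => by simp [Mop]⟩⟩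

theorem ker_mop_sub_smul {α : K} (hα : α ≠ 0) : ker (Mop K - α • 1) = span K {Psi1 K α} := by
  refine le_antisymm (fun a ha => ?_) ?_
  · have hrec : ∀ n : ℤ, a (n - 1) = α * a n := fun n => sub_eq_zero.1 (congrFun ha n)
    have hconst : ∀ n : ℤ, α ^ n * a n = a 0 := by
      intro n
      induction n using Int.induction_on with
      | zero => simp
      | succ n ih =>
        rw [← ih, zpow_add_one₀ hα, mul_assoc, ← hrec, add_sub_cancel_right]
      | pred n ih =>
        rw [← ih, hrec, ← mul_assoc, ← zpow_add_one₀ hα, sub_add_cancel]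
    refine mem_span_singleton.2 ⟨a 0, funext fun n => ?_⟩
    have hn : α ^ n ≠ 0 := zpow_ne_zero n hα
    change a 0 * α ^ (-n) = a n
    rw [← hconst n, zpow_neg, mul_right_comm, mul_inv_cancel₀ hn, one_mul]
  · rw [span_le, singleton_subset_iff, SetLike.mem_coe, mem_ker]
    funext n
    simp [Mop, Psi1, zpow_sub₀ hα, div_eq_mul_inv]

end LaurentShift

namespace IsJordanChain

variable {K : Type*} [Field K] {α : K} {Ψ : ℕ → ℤ → K}

theorem mop_sub_smul_apply_succ (hΨ : IsJordanChain K α Ψ) (j : ℕ) :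
    (Mop K - α • 1) (Ψ (j + 1 + 1)) = Ψ (j + 1) :=
  hΨ.2 (j + 2) (by omega)

theorem ker_mop_sub_smul_pow (hΨ : IsJordanChain K α Ψ) (hα : α ≠ 0) (k : ℕ) :
    ker ((Mop K - α • 1) ^ k) = span K (range fun j : Fin k => Ψ (j + 1)) :=
  ker_pow_eq_span_chain (w := fun j => Ψ (j + 1)) hΨ.mop_sub_smul_apply_succ
    (by rw [ker_mop_sub_smul hα, hΨ.1]) k

theorem linearIndependent (hΨ : IsJordanChain K α Ψ) (hα : α ≠ 0) (k : ℕ) :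
    LinearIndependent K fun j : Fin k => Ψ (j + 1) := by
  refine linearIndependent_chain (w := fun j => Ψ (j + 1)) hΨ.mop_sub_smul_apply_succ ?_ ?_ k
  · rw [← mem_ker, ker_mop_sub_smul hα, zero_add, hΨ.1]
    exact mem_span_singleton_self _
  · rw [zero_add, hΨ.1]
    exact fun h => by simpa [Psi1] using congrFun h 0

end IsJordanChain

section PolynomialKernels

variable {R V : Type*} [CommRing R] [AddCommGroup V] [Module R V]

theorem aeval_X_sub_C_pow (f : Module.End R V) (μ : R) (k : ℕ) :
    aeval f ((X - C μ) ^ k) = (f - μ • 1) ^ k := by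
  rw [map_pow, map_sub, aeval_X, aeval_C, Module.algebraMap_end_eq_smul_id]
  rfl

theorem ker_aeval_prod_of_pairwise_isCoprime {ι : Type*} (f : Module.End R V) (s : Finset ι)
    {q : ι → R[X]} (hq : (s : Set ι).Pairwise (IsCoprime on q)) :
    ker (aeval f (∏ i ∈ s, q i)) = ⨆ i ∈ s, ker (aeval f (q i)) := by
  induction s using Finset.induction_on with
  | empty => simp [ker_eq_bot', one_apply]
  | insert a s has ih =>
    have hcop : IsCoprime (q a) (∏ i ∈ s, q i) :=
      IsCoprime.prod_right fun i hi => hq (by simp) (by simp [hi]) (by rintro rfl; exact has hi)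
    rw [Finset.prod_insert has, ← sup_ker_aeval_eq_ker_aeval_mul_of_coprime f hcop,
      ih (hq.mono (by simp)), Finset.iSup_insert]

theorem ker_aeval_C_mul_X_pow_mul {f : Module.End R V} (hf : IsUnit f) {c : R} (hc : IsUnit c)
    (k : ℕ) (q : R[X]) : ker (aeval f (C c * X ^ k * q)) = ker (aeval f q) := by
  have hu : IsUnit (aeval f (C c * X ^ k)) := by
    rw [map_mul, aeval_C, aeval_X_pow]
    exact (hc.map _).mul (hf.pow k)
  rw [map_mul, mul_eq_comp]
  exact ker_comp_of_ker_eq_bot _ (ker_eq_bot_of_injective ((Module.End.isUnit_iff _).1 hu).1)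

end PolynomialKernels

theorem linearIndependent_sigma_of_iSupIndep {R M η : Type*} [Ring R] [AddCommGroup M]
    [Module R M] {ιs : η → Type*} {f : ∀ j, ιs j → M} {V : η → Submodule R M}
    (hV : iSupIndep V) (hf : ∀ j, LinearIndependent R (f j))
    (hle : ∀ j, span R (range (f j)) ≤ V j) :
    LinearIndependent R fun x : Σ j, ιs j => f x.1 x.2 :=
  linearIndependent_iUnion_finite hf fun i _ _ hi =>
    (hV.disjoint_biSup hi).mono (hle i) (iSup₂_mono fun j _ => hle j)

theorem basis_ker_pM_general (K : Type*) [Field K]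
    (c : K) (hc : c ≠ 0) (e0 : ℕ) (r : ℕ)
    (α : Fin r → K) (hα0 : ∀ i, α i ≠ 0) (hinj : Function.Injective α)
    (e : Fin r → ℕ)
    (Ψ : Fin r → ℕ → ℤ → K) (hΨ : ∀ i, IsJordanChain K (α i) (Ψ i))
    (p : K[X]) (hp : p = C c * X ^ e0 * ∏ i, (X - C (α i)) ^ e i) :
    LinearIndependent K (fun x : Σ i : Fin r, Fin (e i) => Ψ x.1 ((x.2 : ℕ) + 1)) ∧
    Submodule.span K (Set.range (fun x : Σ i : Fin r, Fin (e i) => Ψ x.1 ((x.2 : ℕ) + 1))) =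
      LinearMap.ker (aeval (Mop K) p) := by
  have hker i : ker (aeval (Mop K) ((X - C (α i)) ^ e i)) =
      span K (range fun j : Fin (e i) => Ψ i (j + 1)) := by
    rw [aeval_X_sub_C_pow, (hΨ i).ker_mop_sub_smul_pow (hα0 i)]
  constructor
  · refine linearIndependent_sigma_of_iSupIndep (((Mop K).independent_genEigenspace ⊤).comp hinj)
      (fun i => (hΨ i).linearIndependent (hα0 i) (e i)) fun i => ?_
    rw [← hker, aeval_X_sub_C_pow, ← genEigenspace_nat]
    exact (genEigenspace _ _).monotone le_top
  · have hcop : Pairwise (IsCoprime on fun i => (X - C (α i)) ^ e i) :=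
      fun i j hij => (pairwise_coprime_X_sub_C hinj hij).pow
    rw [hp, ker_aeval_C_mul_X_pow_mul isUnit_mop hc.isUnit,
      ker_aeval_prod_of_pairwise_isCoprime _ _ (hcop.set_pairwise _),
      range_sigma_eq_iUnion_range, span_iUnion]
    simp only [Finset.mem_univ, iSup_true, hker]

/-- if `p(X) = c X^{e_0} ∏_{i=1}^r (X − α_i)^{e_i}` with `c ≠ 0` and the `α_i`
distinct and nonzero, then `{Ψ_{α_i,k} : 1 ≤ i ≤ r, 1 ≤ k ≤ e_i}` is a basis of `ker p(M)`. -/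
theorem basis_ker_pM (K : Type*) [Field K] [IsAlgClosed K] (q : K) (hq : q ≠ 0)
    (hqi : ∀ n : ℤ, n ≠ 0 → qInt K q n ≠ 0)
    (c : K) (hc : c ≠ 0) (e0 : ℕ) (r : ℕ)
    (α : Fin r → K) (hα0 : ∀ i, α i ≠ 0) (hinj : Function.Injective α)
    (e : Fin r → ℕ) (he : ∀ i, 1 ≤ e i)
    (Ψ : Fin r → ℕ → ℤ → K) (hΨ : ∀ i, IsJordanChain K (α i) (Ψ i))
    (p : K[X]) (hp : p = C c * X ^ e0 * ∏ i, (X - C (α i)) ^ e i) :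
    LinearIndependent K (fun x : Σ i : Fin r, Fin (e i) => Ψ x.1 ((x.2 : ℕ) + 1)) ∧
    Submodule.span K (Set.range (fun x : Σ i : Fin r, Fin (e i) => Ψ x.1 ((x.2 : ℕ) + 1))) =
      LinearMap.ker (aeval (Mop K) p) :=
  basis_ker_pM_general K c hc e0 r α hα0 hinj e Ψ hΨ p hp
end
end

section
/- Let α_1,…,α_r be r distinct nonzero elements of K, let e_1,…,e_r ≥ 1, and for each i let (Ψ_{α_i,s})_{s≥1} be a Jordan chain at α_i. Then the elements Ψ_{α_1,1},…,Ψ_{α_1,e_1},…,Ψ_{α_r,1},…,Ψ_{α_r,e_r} are linearly independent over K. -/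
open Polynomial
open scoped Classical

noncomputable section

-- chain pow lemma
lemma chain_pow {K V : Type*} [Field K] [AddCommGroup V] [Module K V]
    (g : Module.End K V) (v : ℕ → V) (h0 : g (v 0) = 0)
    (hstep : ∀ s, g (v (s + 1)) = v s) :
    ∀ k s : ℕ, (g ^ k) (v s) = if k ≤ s then v (s - k) else 0 := by
  intro k
  induction k with
  | zero => intro s; simp
  | succ k ih =>
    intro s
    rw [pow_succ, Module.End.mul_apply]
    cases s with
    | zero =>
      rw [h0, map_zero]
      simp
    | succ s =>
      rw [hstep, ih s]
      by_cases h : k ≤ s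
      · rw [if_pos h, if_pos (by omega)]
        congr 1; omega
      · rw [if_neg h, if_neg (by omega)]

lemma chain_li {K V : Type*} [Field K] [AddCommGroup V] [Module K V]
    (g : Module.End K V) (v : ℕ → V) (h0 : g (v 0) = 0) (hne : v 0 ≠ 0)
    (hstep : ∀ s, g (v (s + 1)) = v s) (m : ℕ) :
    LinearIndependent K (fun s : Fin m => v s) := by
  induction m with
  | zero => exact linearIndependent_empty_type
  | succ m ih =>
    rw [Fintype.linearIndependent_iff]
    intro c hc
    have hpow := chain_pow g v h0 hstep
    have hlast : c (Fin.last m) = 0 := by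
      have := congrArg (g ^ m) hc
      rw [map_sum, map_zero] at this
      simp only [map_smul, hpow] at this
      rw [Fin.sum_univ_castSucc] at this
      simp only [Fin.coe_castSucc, Fin.val_last] at this
      have hz : ∀ i : Fin m, c i.castSucc • (if m ≤ (i : ℕ) then v ((i : ℕ) - m) else 0) = 0 := by
        intro i
        rw [if_neg (by omega), smul_zero]
      rw [Finset.sum_congr rfl (fun i _ => hz i), Finset.sum_const_zero, zero_add,
        if_pos le_rfl, Nat.sub_self] at this
      exact (smul_eq_zero.mp this).resolve_right hne
    have hrest : ∀ i : Fin m, c i.castSucc = 0 := by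
      rw [Fin.sum_univ_castSucc, hlast, zero_smul, add_zero] at hc
      exact Fintype.linearIndependent_iff.mp ih (fun i => c i.castSucc) hc
    intro i
    rcases Fin.eq_castSucc_or_eq_last i with ⟨j, rfl⟩ | rfl
    · exact hrest j
    · exact hlast


/-- elements of Jordan chains at distinct nonzero points are linearly
independent: `Ψ_{α_1,1},…,Ψ_{α_1,e_1},…,Ψ_{α_r,1},…,Ψ_{α_r,e_r}` are independent over `K`. -/
theorem jordan_chains_linearIndependent (K : Type*) [Field K] (q : K) (hq : q ≠ 0)
    (hqi : ∀ n : ℤ, n ≠ 0 → qInt K q n ≠ 0)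
    (r : ℕ) (α : Fin r → K) (hα0 : ∀ i, α i ≠ 0) (hinj : Function.Injective α)
    (e : Fin r → ℕ) (he : ∀ i, 1 ≤ e i)
    (Ψ : Fin r → ℕ → ℤ → K) (hΨ : ∀ i, IsJordanChain K (α i) (Ψ i)) :
    LinearIndependent K (fun x : Σ i : Fin r, Fin (e i) => Ψ x.1 ((x.2 : ℕ) + 1)) := by
  -- setup: for each i, let g i = Mop - α i • 1
  set M := Mop K with hM
  have h0 : ∀ i, (M - α i • 1) (Ψ i 1) = 0 := by
    intro i
    have h1 := (hΨ i).1
    funext n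
    simp only [LinearMap.sub_apply, LinearMap.smul_apply, Module.End.one_apply, Pi.sub_apply,
      Pi.smul_apply, smul_eq_mul, Pi.zero_apply, h1]
    show (Mop K (Psi1 K (α i))) n - α i * Psi1 K (α i) n = 0
    simp only [Mop, LinearMap.coe_mk, AddHom.coe_mk, Psi1]
    rw [show -(n - 1) = 1 + -n by ring, zpow_add₀ (hα0 i), zpow_one]
    ring
  have hstep : ∀ i s, (M - α i • 1) (Ψ i (s + 1 + 1)) = Ψ i (s + 1) := by
    intro i s
    have h2 := (hΨ i).2 (s + 2) (by omega)
    simpa using h2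
  have hne : ∀ i, Ψ i 1 ≠ 0 := by
    intro i h
    have := congrFun ((hΨ i).1.symm.trans h) 0
    simp [Psi1] at this
  -- each chain is in the max generalized eigenspace
  have hmem : ∀ i s, Ψ i (s + 1) ∈ M.maxGenEigenspace (α i) := by
    intro i s
    rw [Module.End.mem_maxGenEigenspace]
    refine ⟨s + 1, ?_⟩
    have := chain_pow (M - α i • 1) (fun s => Ψ i (s + 1)) (h0 i) (hstep i) (s + 1) s
    simpa using this
  apply linearIndependent_iUnion_finite (f := fun j (s : Fin (e j)) => Ψ j ((s : ℕ) + 1))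
  · intro j
    exact chain_li (M - α j • 1) (fun s => Ψ j (s + 1)) (h0 j) (hne j) (hstep j) (e j)
  · intro i t _ hit
    have hind := M.independent_maxGenEigenspace
    have hdisj := hind (α i)
    refine Disjoint.mono ?_ ?_ hdisj
    · rw [Submodule.span_le]
      rintro x ⟨s, rfl⟩
      exact hmem i s
    · refine iSup₂_le fun j hj => ?_
      have hji : α j ≠ α i := fun h => hit (hinj h ▸ hj)
      refine le_trans ?_ (le_iSup₂ (α j) hji)
      rw [Submodule.span_le]
      rintro x ⟨s, rfl⟩
      exact hmem j s
end
end

section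
/- Suppose q ≠ 1. Let α ∈ K be nonzero, let s ≥ 1, and fix Jordan chains (Ψ_{α,r})_{r≥1} at α and (Ψ_{α/q,r})_{r≥1} at α/q. Then D_q Ψ_{α,s} − (q^{2−s}/(α(q−1))) Ψ_{α/q,s} lies in the K-linear span of {Ψ_{α/q,r} : 1 ≤ r < s} ∪ {Ψ_{α,r} : 1 ≤ r ≤ s}. -/
open Polynomial
open scoped Classical

noncomputable section

/-! Let `E_s` be the element of the statement and `T = M - α/q`. Since `D_q M = q M D_q + 1`, we have
`T D_q = q⁻¹ (D_q (M - α) - 1)`, and as the coefficient of `Ψ_{α/q,s}` is divided by `q` when `s` grows,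
`T E_{s+1} = q⁻¹ (E_s - Ψ_{α,s+1})`. By induction this lies in the image under `T` of the target span:
`T` shifts the chain at `α/q` down by one and is invertible on the span of the chain at `α`, as
`α ≠ α/q`. Since `ker T` is spanned by `Ψ_{α/q,1}`, `E_{s+1}` itself lies in the target span. -/

open Submodule Set

theorem span_image_Ico_le_map_span {R V : Type*} [Semiring R] [AddCommMonoid V] [Module R V]
    {T : Module.End R V} {Ψ : ℕ → V} (hΨ : ∀ r, 1 ≤ r → T (Ψ (r + 1)) = Ψ r) (s : ℕ) :
    span R (Ψ '' Ico 1 s) ≤ (span R (Ψ '' Ico 1 (s + 1))).map T := by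
  rw [map_span]
  refine span_mono ?_
  rintro _ ⟨r, ⟨hr1, hrs⟩, rfl⟩
  exact ⟨Ψ (r + 1), ⟨r + 1, ⟨by omega, by omega⟩, rfl⟩, hΨ r hr1⟩

-- `f - α` is nilpotent on the span of the chain, so `f - β = (f - α) + (α - β)` is invertible there.
theorem span_image_Icc_le_map_sub_smul {K V : Type*} [Field K] [AddCommGroup V] [Module K V]
    {f : Module.End K V} {α β : K} (hαβ : α ≠ β) {Ψ : ℕ → V}
    (h1 : (f - α • 1) (Ψ 1) = 0) (hΨ : ∀ r, 1 ≤ r → (f - α • 1) (Ψ (r + 1)) = Ψ r) (s : ℕ) :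
    span K (Ψ '' Icc 1 s) ≤ (span K (Ψ '' Icc 1 s)).map (f - β • 1) := by
  have hsub : ∀ v, (f - β • 1) v = (f - α • 1) v + (α - β) • v := fun v => by
    simp only [LinearMap.sub_apply, LinearMap.smul_apply, Module.End.one_apply, sub_smul]
    abel
  have hαβ' : α - β ≠ 0 := sub_ne_zero.mpr hαβ
  induction s with
  | zero => simp
  | succ s ih =>
    rw [span_le]
    rintro _ ⟨r, ⟨hr1, hrs⟩, rfl⟩
    have hmono : (span K (Ψ '' Icc 1 s)).map (f - β • 1) ≤
        (span K (Ψ '' Icc 1 (s + 1))).map (f - β • 1) :=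
      map_mono (span_mono (image_mono (Icc_subset_Icc_right s.le_succ)))
    rcases Nat.lt_or_ge r (s + 1) with hr | hr
    · exact hmono (ih (subset_span ⟨r, ⟨hr1, by omega⟩, rfl⟩))
    obtain rfl : r = s + 1 := by omega
    have hmem : Ψ (s + 1) - (α - β)⁻¹ • (f - β • 1) (Ψ (s + 1)) ∈
        (span K (Ψ '' Icc 1 (s + 1))).map (f - β • 1) := by
      rcases Nat.eq_zero_or_pos s with rfl | hs
      · simp [hsub, h1, hαβ']
      · rw [hsub, hΨ s hs, smul_add, inv_smul_smul₀ hαβ', sub_add_cancel_right]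
        exact neg_mem (smul_mem _ _ (hmono (ih (subset_span ⟨s, ⟨hs, le_rfl⟩, rfl⟩))))
    have happ : (α - β)⁻¹ • (f - β • 1) (Ψ (s + 1)) ∈
        (span K (Ψ '' Icc 1 (s + 1))).map (f - β • 1) :=
      smul_mem _ _ (mem_map_of_mem (subset_span ⟨s + 1, ⟨by omega, le_rfl⟩, rfl⟩))
    simpa using add_mem hmem happ

section LaurentSeries

variable {K : Type*} [Field K]

theorem qInt_add_one {q : K} (hq : q ≠ 0) (n : ℤ) : qInt K q (n + 1) = q * qInt K q n + 1 := by
  unfold qInt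
  split_ifs with h
  · subst h; push_cast; ring
  · have h1 : q - 1 ≠ 0 := sub_ne_zero.mpr h
    rw [zpow_add_one₀ hq]
    field_simp
    ring

theorem Dq_Mop {q : K} (hq : q ≠ 0) (a : ℤ → K) :
    Dq K q (Mop K a) = q • Mop K (Dq K q a) + a := by
  funext n
  simp only [Dq, Mop, LinearMap.coe_mk, AddHom.coe_mk, Pi.add_apply, Pi.smul_apply,
    smul_eq_mul, add_sub_cancel_right, sub_add_cancel, qInt_add_one hq n]
  ring

theorem Mop_sub_smul_Dq {q : K} (hq : q ≠ 0) (α : K) (a : ℤ → K) :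
    (Mop K - (α / q) • 1) (Dq K q a) = q⁻¹ • (Dq K q ((Mop K - α • 1) a) - a) := by
  have h := Dq_Mop hq a
  simp only [LinearMap.sub_apply, LinearMap.smul_apply, Module.End.one_apply, map_sub, map_smul,
    h]
  rw [smul_sub, smul_sub, smul_add, inv_smul_smul₀ hq, smul_smul, div_eq_inv_mul]
  abel

theorem ker_Mop_sub_smul_le {β : K} (hβ : β ≠ 0) :
    LinearMap.ker (Mop K - β • 1) ≤ K ∙ Psi1 K β := by
  intro a ha
  have hshift : ∀ n : ℤ, a (n - 1) = β * a n := fun n => by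
    simpa [sub_eq_zero, Mop] using congrFun ha n
  have hper : Function.Periodic (fun n : ℤ => β ^ n * a n) 1 := fun n => by
    simp only
    rw [zpow_add_one₀ hβ, mul_assoc, ← hshift, add_sub_cancel_right]
  refine mem_span_singleton.mpr ⟨a 0, funext fun n => ?_⟩
  have h := hper.int_mul_eq n
  simp only [Int.cast_id, mul_one, zpow_zero, one_mul] at h
  simp only [Pi.smul_apply, smul_eq_mul, Psi1, zpow_neg, ← h]
  field_simp

theorem Dq_Psi1 {q : K} (hq : q ≠ 0) (hq1 : q ≠ 1) {α : K} (hα : α ≠ 0) :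
    Dq K q (Psi1 K α) = (q / (α * (q - 1))) • Psi1 K (α / q) - (α * (q - 1))⁻¹ • Psi1 K α := by
  have h1 : q - 1 ≠ 0 := sub_ne_zero.mpr hq1
  funext n
  simp only [Dq, LinearMap.coe_mk, AddHom.coe_mk, Pi.sub_apply, Pi.smul_apply, smul_eq_mul,
    Psi1, qInt, if_neg hq1, div_zpow, zpow_neg, zpow_add_one₀ hq, zpow_add_one₀ hα]
  have hqn : q ^ n ≠ 0 := zpow_ne_zero n hq
  have hαn : α ^ n ≠ 0 := zpow_ne_zero n hα
  field_simp

theorem IsJordanChain.Mop_sub_smul_one {α : K} (hα : α ≠ 0) {Ψ : ℕ → ℤ → K}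
    (h : IsJordanChain K α Ψ) : (Mop K - α • 1) (Ψ 1) = 0 := by
  funext n
  simp [h.1, Psi1, Mop, zpow_sub₀ hα, zpow_neg, div_eq_mul_inv]

theorem IsJordanChain.Mop_sub_smul_succ {α : K} {Ψ : ℕ → ℤ → K} (h : IsJordanChain K α Ψ)
    {r : ℕ} (hr : 1 ≤ r) : (Mop K - α • 1) (Ψ (r + 1)) = Ψ r := by
  simpa using h.2 (r + 1) (by omega)

end LaurentSeries

theorem Dq_Psi_s_general (K : Type*) [Field K] (q : K) (hq : q ≠ 0) (hq1 : q ≠ 1)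
    (α : K) (hα : α ≠ 0) (s : ℕ) (hs : 1 ≤ s)
    (Ψa Ψaq : ℕ → ℤ → K)
    (h1 : IsJordanChain K α Ψa) (h2 : IsJordanChain K (α / q) Ψaq) :
    Dq K q (Ψa s) - (q ^ ((2 : ℤ) - (s : ℤ)) / (α * (q - 1))) • Ψaq s ∈
      Submodule.span K
        ((Ψaq '' {r : ℕ | 1 ≤ r ∧ r < s}) ∪ (Ψa '' {r : ℕ | 1 ≤ r ∧ r ≤ s})) := by
  change _ ∈ span K (Ψaq '' Ico 1 s ∪ Ψa '' Icc 1 s)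
  induction s, hs using Nat.le_induction with
  | base =>
    rw [h1.1, h2.1, Dq_Psi1 hq hq1 hα, Nat.cast_one, show (2 : ℤ) - 1 = 1 by norm_num, zpow_one,
      sub_sub_cancel_left, ← h1.1]
    exact neg_mem (smul_mem _ _ (subset_span (Or.inr ⟨1, ⟨le_rfl, le_rfl⟩, rfl⟩)))
  | succ s hs ih =>
    set T := Mop K - (α / q) • 1
    have hT : T (Dq K q (Ψa (s + 1)) - (q ^ ((2 : ℤ) - ↑(s + 1)) / (α * (q - 1))) • Ψaq (s + 1)) =
        q⁻¹ • ((Dq K q (Ψa s) - (q ^ ((2 : ℤ) - s) / (α * (q - 1))) • Ψaq s) - Ψa (s + 1)) := by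
      rw [map_sub, map_smul, Mop_sub_smul_Dq hq, h1.Mop_sub_smul_succ hs, h2.Mop_sub_smul_succ hs,
        Nat.cast_succ, ← sub_sub, zpow_sub_one₀ hq]
      module
    have hker : LinearMap.ker T ≤ span K (Ψaq '' Ico 1 (s + 1) ∪ Ψa '' Icc 1 (s + 1)) :=
      (ker_Mop_sub_smul_le (div_ne_zero hα hq)).trans <| span_le.mpr <| by
        rw [singleton_subset_iff, ← h2.1]
        exact subset_span (Or.inl ⟨1, ⟨le_rfl, by omega⟩, rfl⟩)
    have hαq : α ≠ α / q := by rwa [ne_eq, eq_div_iff hq, mul_eq_left₀ hα]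
    have hrange : span K (Ψaq '' Ico 1 s ∪ Ψa '' Icc 1 (s + 1)) ≤
        (span K (Ψaq '' Ico 1 (s + 1) ∪ Ψa '' Icc 1 (s + 1))).map T := by
      rw [span_union, span_union, Submodule.map_sup]
      exact sup_le_sup (span_image_Ico_le_map_span (fun r hr => h2.Mop_sub_smul_succ hr) s)
        (span_image_Icc_le_map_sub_smul hαq (h1.Mop_sub_smul_one hα)
          (fun r hr => h1.Mop_sub_smul_succ hr) (s + 1))
    rw [← comap_map_eq_self hker, mem_comap, hT]
    refine hrange (smul_mem _ _ (sub_mem (span_mono ?_ ih) (subset_span ?_)))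
    · exact union_subset_union_right _ (image_mono (Icc_subset_Icc_right s.le_succ))
    · exact Or.inr ⟨s + 1, ⟨by omega, le_rfl⟩, rfl⟩

/-- for `q ≠ 1`, `D_q Ψ_{α,s} − (q^{2−s}/(α(q−1))) Ψ_{α/q,s}` lies in the
span of `{Ψ_{α/q,r} : 1 ≤ r < s} ∪ {Ψ_{α,r} : 1 ≤ r ≤ s}`. -/
theorem Dq_Psi_s (K : Type*) [Field K] (q : K) (hq : q ≠ 0) (hq1 : q ≠ 1)
    (hqi : ∀ n : ℤ, n ≠ 0 → qInt K q n ≠ 0)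
    (α : K) (hα : α ≠ 0) (s : ℕ) (hs : 1 ≤ s)
    (Ψa Ψaq : ℕ → ℤ → K)
    (h1 : IsJordanChain K α Ψa) (h2 : IsJordanChain K (α / q) Ψaq) :
    Dq K q (Ψa s) - (q ^ ((2 : ℤ) - (s : ℤ)) / (α * (q - 1))) • Ψaq s ∈
      Submodule.span K
        ((Ψaq '' {r : ℕ | 1 ≤ r ∧ r < s}) ∪ (Ψa '' {r : ℕ | 1 ≤ r ∧ r ≤ s})) :=
  Dq_Psi_s_general K q hq hq1 α hα s hs Ψa Ψaq h1 h2
end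
end

section
/- Suppose q ≠ 1. Let P = Σ_{j=0}^m p_j(M) D_q^j with m ≥ 0 and p_m ≠ 0, let α ∈ K be nonzero, let s ≥ 1, and fix a Jordan chain (Ψ_{β,r})_{r≥1} at each nonzero β ∈ K. Then P Ψ_{α,s} − (q^{m(m−2s+3)/2}/(α^m (q−1)^m)) · p_m(α/q^m) · Ψ_{α/q^m, s} lies in the K-linear span of {Ψ_{α/q^m, r} : 1 ≤ r < s} ∪ {Ψ_{α/q^i, r} : 0 ≤ i < m, 1 ≤ r ≤ s}. (Here m(m−2s+3)/2 is an integer, possibly negative, and q^{m(m−2s+3)/2} is the corresponding integer power of the invertible element q.) -/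
open Polynomial
open scoped Classical

noncomputable section

/-!
Write `G(β, t) = ker (M - β)^t`; a Jordan chain at `β ≠ 0` spans `G(β, t)` with its first `t`
terms, because `ker (M - β)` is the line through `Ψ_{β,1}`. With `E = M⁻¹` and the dilation
`S a(t) = a(q t)` one has `D_q = (q - 1)⁻¹ (q S E - E)`, `E` commutes with `M` and
`M S = q⁻¹ S M`, so `S` carries `G(β, t)` to `G(β/q, t)`. Hence `D_q` maps `G(β, t)` into
`G(β/q, t) + G(β, t)`, and modulo `G(β/q, t) + G(β, t + 1)` it sends `Ψ_{β,t+1}` to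
`q^(1-t) / (β (q - 1)) · Ψ_{β/q,t+1}`. Iterating from `β = α` gives the leading coefficient of
`D_q^m Ψ_{α,s}` as a product whose exponents of `q` add up to `m (m - 2s + 3) / 2`, while
`p(M)` acts on `Ψ_{β,s}` as multiplication by `p(β)` modulo `G(β, s - 1)`.
-/

lemma commute_aeval_self {R A : Type*} [CommSemiring R] [Semiring A] [Algebra R A] (a : A)
    (p : R[X]) : Commute a (aeval a p) := by
  simpa using (commute_X p).map (aeval a)

section GenEigenspace

variable {R V : Type*} [CommRing R] [AddCommGroup V] [Module R V]
  {f : Module.End R V} {μ : R} {k : ℕ} {x : V}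

lemma sub_smul_apply_mem_genEigenspace (hx : x ∈ f.genEigenspace μ (k + 1 : ℕ)) :
    (f - μ • 1) x ∈ f.genEigenspace μ k := by
  rw [Module.End.mem_genEigenspace_nat, LinearMap.mem_ker] at hx ⊢
  rwa [← Module.End.mul_apply, ← pow_succ]

lemma aeval_apply_sub_eval_smul_mem_genEigenspace (p : R[X])
    (hx : x ∈ f.genEigenspace μ (k + 1 : ℕ)) :
    aeval f p x - p.eval μ • x ∈ f.genEigenspace μ k := by
  obtain ⟨g, hg⟩ := X_sub_C_dvd_sub_C_eval (a := μ) (p := p)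
  have hop : aeval f p - p.eval μ • 1 = (f - μ • 1) * aeval f g := by
    rw [← Algebra.algebraMap_eq_smul_one, ← Algebra.algebraMap_eq_smul_one, ← aeval_C,
      ← map_sub, hg, map_mul, map_sub, aeval_X, aeval_C]
  have hgx : aeval f g x ∈ f.genEigenspace μ (k + 1 : ℕ) :=
    Module.End.mapsTo_genEigenspace_of_comm (commute_aeval_self f g) μ _ hx
  have := LinearMap.congr_fun hop x
  simp only [LinearMap.sub_apply, LinearMap.smul_apply, Module.End.one_apply,
    Module.End.mul_apply] at this
  exact this ▸ sub_smul_apply_mem_genEigenspace hgx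

end GenEigenspace

section Intertwining

variable {R V : Type*} [CommRing R] [AddCommGroup V] [Module R V]
  {f g : Module.End R V} {c μ : R}

lemma pow_sub_smul_mul_of_mul_eq_smul_mul (h : f * g = c • (g * f)) (k : ℕ) :
    (f - (c * μ) • 1) ^ k * g = c ^ k • (g * (f - μ • 1) ^ k) := by
  have h1 : (f - (c * μ) • 1) * g = c • (g * (f - μ • 1)) := by
    rw [sub_mul, h, mul_sub, smul_sub, mul_smul, smul_mul_assoc, smul_mul_assoc, one_mul,
      mul_smul_comm, mul_one]
  induction k with
  | zero => simp
  | succ k ih =>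
    rw [pow_succ', mul_assoc, ih, mul_smul_comm, ← mul_assoc, h1, smul_mul_assoc, smul_smul,
      mul_assoc, ← pow_succ', ← pow_succ]

lemma mapsTo_genEigenspace_of_mul_eq_smul_mul (h : f * g = c • (g * f)) (k : ℕ) :
    Set.MapsTo g (f.genEigenspace μ k) (f.genEigenspace (c * μ) k) := by
  intro x hx
  simp only [SetLike.mem_coe, Module.End.mem_genEigenspace_nat, LinearMap.mem_ker] at hx ⊢
  rw [← Module.End.mul_apply, pow_sub_smul_mul_of_mul_eq_smul_mul h, LinearMap.smul_apply,
    Module.End.mul_apply, hx, map_zero, smul_zero]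

end Intertwining

lemma apply_sub_inv_smul_mem_genEigenspace {K V : Type*} [Field K] [AddCommGroup V]
    [Module K V] {f g : Module.End K V} (hgf : g * f = 1) (hfg : f * g = 1) {μ : K}
    (hμ : μ ≠ 0) {k : ℕ} {x : V} (hx : x ∈ f.genEigenspace μ (k + 1 : ℕ)) :
    g x - μ⁻¹ • x ∈ f.genEigenspace μ k := by
  have hop : g - μ⁻¹ • 1 = -μ⁻¹ • (g * (f - μ • 1)) := by
    rw [mul_sub, hgf, mul_smul_comm, mul_one, smul_sub, smul_smul, neg_mul, inv_mul_cancel₀ hμ]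
    module
  have := LinearMap.congr_fun hop x
  simp only [LinearMap.sub_apply, LinearMap.smul_apply, Module.End.one_apply,
    Module.End.mul_apply] at this
  rw [this]
  exact Submodule.smul_mem _ _ (Module.End.mapsTo_genEigenspace_of_comm
    (hfg.trans hgf.symm) μ k (sub_smul_apply_mem_genEigenspace hx))

section Operators

variable {K : Type*} [Field K] {q β : K}

def Minv (K : Type*) [Field K] : Module.End K (ℤ → K) where
  toFun a := fun n => a (n + 1)
  map_add' _ _ := rfl
  map_smul' _ _ := rfl

/-- The `q`-dilation `a(t) ↦ a(q t)` of Laurent series. -/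
def qDilate (K : Type*) [Field K] (q : K) : Module.End K (ℤ → K) where
  toFun a := fun n => q ^ n * a n
  map_add' _ _ := by funext n; simp [mul_add]
  map_smul' _ _ := by funext n; simp [mul_left_comm]

lemma Minv_mul_Mop : Minv K * Mop K = 1 := by
  ext a n; simp [Minv, Mop]

lemma Mop_mul_Minv : Mop K * Minv K = 1 := by
  ext a n; simp [Minv, Mop]

lemma Mop_mul_qDilate (hq : q ≠ 0) : Mop K * qDilate K q = q⁻¹ • (qDilate K q * Mop K) := by
  ext a n
  simp only [Module.End.mul_apply, LinearMap.smul_apply, Pi.smul_apply, smul_eq_mul]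
  simp [Mop, qDilate, zpow_sub_one₀ hq, mul_assoc, mul_left_comm]

lemma Dq_eq_qDilate_Minv (hq : q ≠ 0) (hq1 : q ≠ 1) :
    Dq K q = (q - 1)⁻¹ • (q • (qDilate K q * Minv K) - Minv K) := by
  ext a n
  simp only [Module.End.mul_apply, LinearMap.smul_apply, LinearMap.sub_apply, Pi.smul_apply,
    Pi.sub_apply, smul_eq_mul]
  simp only [Dq, qInt, if_neg hq1, qDilate, Minv, LinearMap.coe_mk, AddHom.coe_mk,
    zpow_add_one₀ hq]
  field_simp

lemma Mop_Psi1 (hβ : β ≠ 0) : Mop K (Psi1 K β) = β • Psi1 K β := by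
  funext n
  simp [Mop, Psi1, zpow_add_one₀ hβ, mul_comm, show -(n - 1) = -n + 1 by ring]

lemma qDilate_Psi1 (hq : q ≠ 0) : qDilate K q (Psi1 K β) = Psi1 K (β / q) := by
  funext n
  simp only [qDilate, Psi1, LinearMap.coe_mk, AddHom.coe_mk, div_zpow, zpow_neg]
  field_simp

lemma genEigenspace_Mop_one (hβ : β ≠ 0) : (Mop K).genEigenspace β 1 = K ∙ Psi1 K β := by
  refine le_antisymm (fun a ha ↦ ?_) ?_
  · rw [Module.End.mem_genEigenspace_one] at ha
    have hstep (n : ℤ) : a n = β * a (n + 1) := by simpa [Mop] using congrFun ha (n + 1)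
    have hper : Function.Periodic (fun n : ℤ ↦ β ^ n * a n) 1 := fun n ↦ by
      simp only [hstep n, zpow_add_one₀ hβ]; ring
    refine Submodule.mem_span_singleton.mpr ⟨a 0, funext fun n ↦ ?_⟩
    have := hper.int_mul n 0
    simp only [Int.cast_id, zero_add, mul_one, zpow_zero, one_mul] at this
    simp only [Psi1, ← this, Pi.smul_apply, smul_eq_mul, zpow_neg]
    field_simp
  · rw [Submodule.span_singleton_le_iff_mem, Module.End.mem_genEigenspace_one]
    exact Mop_Psi1 hβ

end Operators

namespace IsJordanChain

variable {K : Type*} [Field K] {β : K} {Φ : ℕ → ℤ → K}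

lemma Mop_sub_smul_apply_succ (hΦ : IsJordanChain K β Φ) {r : ℕ} (hr : 1 ≤ r) :
    (Mop K - β • 1) (Φ (r + 1)) = Φ r := by
  simpa using hΦ.2 (r + 1) (by omega)

lemma Mop_sub_smul_apply_one (hΦ : IsJordanChain K β Φ) (hβ : β ≠ 0) :
    (Mop K - β • 1) (Φ 1) = 0 := by
  simp [hΦ.1, Mop_Psi1 hβ]

lemma pow_Mop_sub_smul_apply (hΦ : IsJordanChain K β Φ) {r : ℕ} (hr : 1 ≤ r) (k : ℕ) :
    ((Mop K - β • 1) ^ k) (Φ (r + k)) = Φ r := by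
  induction k with
  | zero => rfl
  | succ k ih =>
    rw [pow_succ, Module.End.mul_apply, ← add_assoc, hΦ.Mop_sub_smul_apply_succ (by omega), ih]

lemma mem_genEigenspace (hΦ : IsJordanChain K β Φ) (hβ : β ≠ 0) {r t : ℕ} (hr : 1 ≤ r)
    (hrt : r ≤ t) : Φ r ∈ (Mop K).genEigenspace β t := by
  obtain ⟨r, rfl⟩ : ∃ r', r = r' + 1 := ⟨r - 1, by omega⟩
  refine (Module.End.genEigenspace _ _).monotone (Nat.cast_le.mpr hrt) ?_
  rw [Module.End.mem_genEigenspace_nat, LinearMap.mem_ker, pow_succ', Module.End.mul_apply,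
    add_comm, hΦ.pow_Mop_sub_smul_apply le_rfl, hΦ.Mop_sub_smul_apply_one hβ]

lemma span_eq_genEigenspace (hΦ : IsJordanChain K β Φ) (hβ : β ≠ 0) (t : ℕ) :
    Submodule.span K (Φ '' Set.Icc 1 t) = (Mop K).genEigenspace β t := by
  refine le_antisymm (Submodule.span_le.mpr ?_) ?_
  · rintro _ ⟨r, ⟨hr, hrt⟩, rfl⟩
    exact hΦ.mem_genEigenspace hβ hr hrt
  induction t with
  | zero => simp
  | succ t ih =>
    intro x hx
    have hlift : Submodule.span K (Φ '' Set.Icc 1 t) ≤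
        (Submodule.span K (Φ '' Set.Icc 1 (t + 1))).map (Mop K - β • 1) := by
      refine Submodule.span_le.mpr ?_
      rintro _ ⟨r, ⟨hr, hrt⟩, rfl⟩
      exact ⟨Φ (r + 1), Submodule.subset_span ⟨r + 1, ⟨by omega, by omega⟩, rfl⟩,
        hΦ.Mop_sub_smul_apply_succ hr⟩
    obtain ⟨w, hw, hwx⟩ := hlift (ih (sub_smul_apply_mem_genEigenspace hx))
    have hker : x - w ∈ K ∙ Φ 1 := by
      rw [hΦ.1, ← genEigenspace_Mop_one hβ, Module.End.genEigenspace_one, LinearMap.mem_ker,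
        map_sub, hwx, sub_self]
    have hΦ1 : K ∙ Φ 1 ≤ Submodule.span K (Φ '' Set.Icc 1 (t + 1)) :=
      Submodule.span_mono (by simpa using ⟨1, ⟨le_rfl, by omega⟩, rfl⟩)
    simpa using Submodule.add_mem _ hw (hΦ1 hker)

end IsJordanChain

section Dq

variable {K : Type*} [Field K] {q β : K}

lemma Minv_mapsTo_genEigenspace (t : ℕ) :
    Set.MapsTo (Minv K) ((Mop K).genEigenspace β t) ((Mop K).genEigenspace β t) :=
  Module.End.mapsTo_genEigenspace_of_comm
    (show Commute (Mop K) (Minv K) from Mop_mul_Minv.trans Minv_mul_Mop.symm) β t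

lemma qDilate_mapsTo_genEigenspace (hq : q ≠ 0) (t : ℕ) :
    Set.MapsTo (qDilate K q) ((Mop K).genEigenspace β t)
      ((Mop K).genEigenspace (β / q) t) := by
  rw [div_eq_inv_mul]
  exact mapsTo_genEigenspace_of_mul_eq_smul_mul (Mop_mul_qDilate hq) t

lemma Dq_map_genEigenspace_le (hq : q ≠ 0) (hq1 : q ≠ 1) (t : ℕ) :
    ((Mop K).genEigenspace β t).map (Dq K q) ≤
      (Mop K).genEigenspace (β / q) t ⊔ (Mop K).genEigenspace β t := by
  rintro _ ⟨x, hx, rfl⟩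
  have hEx := Minv_mapsTo_genEigenspace t hx
  rw [Dq_eq_qDilate_Minv hq hq1]
  exact Submodule.smul_mem _ _ (Submodule.sub_mem _
    (Submodule.mem_sup_left (Submodule.smul_mem _ _ (qDilate_mapsTo_genEigenspace hq t hEx)))
    (Submodule.mem_sup_right hEx))

namespace IsJordanChain

variable {Φ Φ' : ℕ → ℤ → K}

lemma qDilate_apply_sub_smul_mem (hΦ : IsJordanChain K β Φ) (hΦ' : IsJordanChain K (β / q) Φ')
    (hq : q ≠ 0) (t : ℕ) :
    qDilate K q (Φ (t + 1)) - q ^ (-t : ℤ) • Φ' (t + 1) ∈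
      (Mop K).genEigenspace (β / q) t := by
  have hΦt : ((Mop K - (β / q) • 1) ^ t) (qDilate K q (Φ (1 + t))) = q⁻¹ ^ t • Φ' 1 := by
    rw [div_eq_inv_mul, ← Module.End.mul_apply,
      pow_sub_smul_mul_of_mul_eq_smul_mul (Mop_mul_qDilate hq), LinearMap.smul_apply,
      Module.End.mul_apply, hΦ.pow_Mop_sub_smul_apply le_rfl, hΦ.1, hΦ'.1, qDilate_Psi1 hq]
  rw [Module.End.mem_genEigenspace_nat, LinearMap.mem_ker, map_sub, map_smul, add_comm t 1, hΦt,
    hΦ'.pow_Mop_sub_smul_apply le_rfl, inv_pow, zpow_neg, zpow_natCast, sub_self]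

lemma Dq_apply_sub_smul_mem (hΦ : IsJordanChain K β Φ) (hΦ' : IsJordanChain K (β / q) Φ')
    (hβ : β ≠ 0) (hq : q ≠ 0) (hq1 : q ≠ 1) (t : ℕ) :
    Dq K q (Φ (t + 1)) - (q ^ (1 - t : ℤ) / (β * (q - 1))) • Φ' (t + 1) ∈
      (Mop K).genEigenspace (β / q) t ⊔ (Mop K).genEigenspace β (t + 1 : ℕ) := by
  set x := Φ (t + 1)
  have hx : x ∈ (Mop K).genEigenspace β (t + 1 : ℕ) :=
    hΦ.mem_genEigenspace hβ (by omega) le_rfl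
  have hE : Minv K x - β⁻¹ • x ∈ (Mop K).genEigenspace β t :=
    apply_sub_inv_smul_mem_genEigenspace Minv_mul_Mop Mop_mul_Minv hβ hx
  have hS := hΦ.qDilate_apply_sub_smul_mem hΦ' hq t
  have hc :
      q ^ (1 - t : ℤ) / (β * (q - 1)) = (q - 1)⁻¹ * (q * (β⁻¹ * q ^ (-t : ℤ))) := by
    rw [zpow_sub₀ hq, zpow_one, zpow_neg, zpow_natCast]
    field_simp
  have hsplit : Dq K q x - (q ^ (1 - t : ℤ) / (β * (q - 1))) • Φ' (t + 1) =
      (q - 1)⁻¹ • (q • (qDilate K q (Minv K x - β⁻¹ • x) +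
        β⁻¹ • (qDilate K q x - q ^ (-t : ℤ) • Φ' (t + 1))) - Minv K x) := by
    rw [Dq_eq_qDilate_Minv hq hq1, hc]
    simp only [LinearMap.smul_apply, LinearMap.sub_apply, Module.End.mul_apply, map_sub, map_smul]
    module
  rw [hsplit]
  refine Submodule.smul_mem _ _ (Submodule.sub_mem _ (Submodule.mem_sup_left ?_)
    (Submodule.mem_sup_right (Minv_mapsTo_genEigenspace _ hx)))
  exact Submodule.smul_mem _ _ (Submodule.add_mem _ (qDilate_mapsTo_genEigenspace hq t hE)
    (Submodule.smul_mem _ _ hS))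

end IsJordanChain

end Dq

section Iteration

variable {K : Type*} [Field K] {q α : K}

def blockSum (q α : K) (s j : ℕ) : Submodule K (ℤ → K) :=
  ⨆ i < j, (Mop K).genEigenspace (α / q ^ i) s

lemma genEigenspace_le_blockSum {s i j : ℕ} (h : i < j) :
    (Mop K).genEigenspace (α / q ^ i) s ≤ blockSum q α s j :=
  le_iSup₂_of_le i h le_rfl

lemma blockSum_mono {s j j' : ℕ} (h : j ≤ j') : blockSum q α s j ≤ blockSum q α s j' :=
  iSup₂_le fun _ hi ↦ genEigenspace_le_blockSum (hi.trans_le h)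

lemma blockSum_map_le_of_commute {g : Module.End K (ℤ → K)} (h : Commute (Mop K) g)
    (s j : ℕ) :
    (blockSum q α s j).map g ≤ blockSum q α s j := by
  simp only [blockSum, Submodule.map_iSup]
  exact iSup₂_mono fun i _ ↦
    Submodule.map_le_iff_le_comap.mpr (Module.End.mapsTo_genEigenspace_of_comm h _ _)

lemma aeval_Mop_apply_mem_sup_blockSum (p : K[X]) {β : K} {t s j : ℕ} {x : ℤ → K}
    (hx : x ∈ (Mop K).genEigenspace β t ⊔ blockSum q α s j) :
    aeval (Mop K) p x ∈ (Mop K).genEigenspace β t ⊔ blockSum q α s j := by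
  have hcomm := commute_aeval_self (Mop K) p
  refine SetLike.le_def.mp ?_ (Submodule.mem_map_of_mem hx)
  rw [Submodule.map_sup]
  exact sup_le_sup (Submodule.map_le_iff_le_comap.mpr
    (Module.End.mapsTo_genEigenspace_of_comm hcomm _ _)) (blockSum_map_le_of_commute hcomm _ _)

lemma blockSum_map_Dq_le (hq : q ≠ 0) (hq1 : q ≠ 1) (s j : ℕ) :
    (blockSum q α s j).map (Dq K q) ≤ blockSum q α s (j + 1) := by
  simp only [blockSum, Submodule.map_iSup]
  refine iSup₂_le fun i hi ↦ (Dq_map_genEigenspace_le hq hq1 s).trans (sup_le ?_ ?_)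
  · rw [div_div, ← pow_succ]
    exact genEigenspace_le_blockSum (by omega)
  · exact genEigenspace_le_blockSum (by omega)

lemma Dq_pow_apply_mem_blockSum (hq : q ≠ 0) (hq1 : q ≠ 1) {s : ℕ} {x : ℤ → K}
    (hx : x ∈ (Mop K).genEigenspace α s) (j : ℕ) :
    (Dq K q ^ j) x ∈ blockSum q α s (j + 1) := by
  induction j with
  | zero =>
    have h0 := genEigenspace_le_blockSum (q := q) (α := α) (s := s) zero_lt_one
    rw [pow_zero, div_one] at h0
    simpa using h0 hx
  | succ j ih =>
    rw [pow_succ', Module.End.mul_apply]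
    exact blockSum_map_Dq_le hq hq1 s _ (Submodule.mem_map_of_mem ih)

lemma Dq_map_sup_blockSum_le (hq : q ≠ 0) (hq1 : q ≠ 1) (t j : ℕ) :
    ((Mop K).genEigenspace (α / q ^ j) t ⊔ blockSum q α (t + 1) j).map (Dq K q) ≤
      (Mop K).genEigenspace (α / q ^ (j + 1)) t ⊔ blockSum q α (t + 1) (j + 1) := by
  rw [Submodule.map_sup, pow_succ, ← div_div]
  refine sup_le ((Dq_map_genEigenspace_le hq hq1 t).trans (sup_le_sup_left ?_ _))
    (le_sup_of_le_right (blockSum_map_Dq_le hq hq1 _ j))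
  exact ((Module.End.genEigenspace _ _).monotone (by simp)).trans
    (genEigenspace_le_blockSum (Nat.lt_succ_self j))

variable {Ψ : K → ℕ → ℤ → K}

lemma Dq_pow_apply_sub_smul_mem (hq : q ≠ 0) (hq1 : q ≠ 1) (hα : α ≠ 0)
    (hΨ : ∀ β : K, β ≠ 0 → IsJordanChain K β (Ψ β)) (t j : ℕ) :
    (Dq K q ^ j) (Ψ α (t + 1)) -
        (∏ i ∈ Finset.range j, q ^ (1 - t : ℤ) / (α / q ^ i * (q - 1))) •
          Ψ (α / q ^ j) (t + 1) ∈
      (Mop K).genEigenspace (α / q ^ j) t ⊔ blockSum q α (t + 1) j := by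
  induction j with
  | zero => simp
  | succ j ih =>
    set c := ∏ i ∈ Finset.range j, q ^ (1 - t : ℤ) / (α / q ^ i * (q - 1))
    set c' := q ^ (1 - t : ℤ) / (α / q ^ j * (q - 1))
    have hβ : α / q ^ j ≠ 0 := div_ne_zero hα (pow_ne_zero j hq)
    have hchain' : IsJordanChain K (α / q ^ j / q) (Ψ (α / q ^ (j + 1))) := by
      rw [div_div, ← pow_succ]
      exact hΨ _ (div_ne_zero hα (pow_ne_zero _ hq))
    have hstep := (hΨ _ hβ).Dq_apply_sub_smul_mem hchain' hβ hq hq1 t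
    rw [div_div, ← pow_succ] at hstep
    have hsplit : (Dq K q ^ (j + 1)) (Ψ α (t + 1)) - (c * c') • Ψ (α / q ^ (j + 1)) (t + 1) =
        Dq K q ((Dq K q ^ j) (Ψ α (t + 1)) - c • Ψ (α / q ^ j) (t + 1)) +
          c • (Dq K q (Ψ (α / q ^ j) (t + 1)) - c' • Ψ (α / q ^ (j + 1)) (t + 1)) := by
      rw [pow_succ', Module.End.mul_apply, map_sub, map_smul, smul_sub, smul_smul]
      abel
    rw [Finset.prod_range_succ, hsplit]
    exact Submodule.add_mem _
      (Dq_map_sup_blockSum_le hq hq1 t j (Submodule.mem_map_of_mem ih))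
      (Submodule.smul_mem _ _
        (SetLike.le_def.mp (sup_le_sup_left (genEigenspace_le_blockSum j.lt_succ_self) _) hstep))

lemma sup_blockSum_le_span (hq : q ≠ 0) (hα : α ≠ 0)
    (hΨ : ∀ β : K, β ≠ 0 → IsJordanChain K β (Ψ β)) (t m : ℕ) :
    (Mop K).genEigenspace (α / q ^ m) t ⊔ blockSum q α (t + 1) m ≤
      Submodule.span K
        ({x | ∃ r : ℕ, 1 ≤ r ∧ r < t + 1 ∧ x = Ψ (α / q ^ m) r} ∪
          {x | ∃ i r : ℕ, i < m ∧ 1 ≤ r ∧ r ≤ t + 1 ∧ x = Ψ (α / q ^ i) r}) := by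
  have hne (i : ℕ) : α / q ^ i ≠ 0 := div_ne_zero hα (pow_ne_zero i hq)
  refine sup_le ?_ (iSup₂_le fun i hi ↦ ?_)
  · rw [← (hΨ _ (hne m)).span_eq_genEigenspace (hne m)]
    refine Submodule.span_mono (Set.subset_union_of_subset_left ?_ _)
    rintro _ ⟨r, ⟨hr, hrt⟩, rfl⟩
    exact ⟨r, hr, by omega, rfl⟩
  · rw [← (hΨ _ (hne i)).span_eq_genEigenspace (hne i)]
    refine Submodule.span_mono (Set.subset_union_of_subset_right ?_ _)
    rintro _ ⟨r, ⟨hr, hrt⟩, rfl⟩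
    exact ⟨i, r, hi, hr, hrt, rfl⟩

end Iteration

section Coefficient

variable {K : Type*} [Field K] {q α : K}

lemma two_mul_sum_range_exponent (t m : ℕ) :
    2 * ∑ i ∈ Finset.range m, (1 - t + i : ℤ) = m * (m - 2 * ((t + 1 : ℕ) : ℤ) + 3) := by
  induction m with
  | zero => simp
  | succ m ih =>
    rw [Finset.sum_range_succ, mul_add, ih]
    push_cast
    ring

lemma prod_range_leading_coeff (hq : q ≠ 0) (t m : ℕ) :
    ∏ i ∈ Finset.range m, q ^ (1 - t : ℤ) / (α / q ^ i * (q - 1)) =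
      q ^ ((m : ℤ) * (m - 2 * ((t + 1 : ℕ) : ℤ) + 3) / 2) / (α ^ m * (q - 1) ^ m) := by
  rw [← two_mul_sum_range_exponent, Int.mul_ediv_cancel_left _ two_ne_zero]
  induction m with
  | zero => simp
  | succ m ih =>
    rw [Finset.prod_range_succ, ih, Finset.sum_range_succ, zpow_add₀ hq, zpow_add₀ hq,
      zpow_natCast, div_mul_eq_mul_div α, div_div_eq_mul_div, div_mul_div_comm]
    congr 1
    ring

end Coefficient

theorem P_Psi_s_q_ne_one_general (K : Type*) [Field K] (q : K) (hq : q ≠ 0) (hq1 : q ≠ 1)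
    (m : ℕ) (p : ℕ → K[X])
    (α : K) (hα : α ≠ 0) (s : ℕ) (hs : 1 ≤ s)
    (Ψ : K → ℕ → ℤ → K) (hΨ : ∀ β : K, β ≠ 0 → IsJordanChain K β (Ψ β)) :
    (∑ j ∈ Finset.range (m + 1), aeval (Mop K) (p j) * Dq K q ^ j) (Ψ α s) -
        ((q ^ (((m : ℤ) * ((m : ℤ) - 2 * (s : ℤ) + 3)) / 2) / (α ^ m * (q - 1) ^ m)) *
          (p m).eval (α / q ^ m)) • Ψ (α / q ^ m) s ∈
      Submodule.span K
        ({x : ℤ → K | ∃ r : ℕ, 1 ≤ r ∧ r < s ∧ x = Ψ (α / q ^ m) r} ∪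
         {x : ℤ → K | ∃ i r : ℕ, i < m ∧ 1 ≤ r ∧ r ≤ s ∧ x = Ψ (α / q ^ i) r}) := by
  obtain ⟨t, rfl⟩ : ∃ t, s = t + 1 := ⟨s - 1, by omega⟩
  have hβ : α / q ^ m ≠ 0 := div_ne_zero hα (pow_ne_zero m hq)
  have hΨα : Ψ α (t + 1) ∈ (Mop K).genEigenspace α (t + 1 : ℕ) :=
    (hΨ α hα).mem_genEigenspace hα (by omega) le_rfl
  rw [← prod_range_leading_coeff hq, Finset.sum_range_succ, LinearMap.add_apply, add_sub_assoc]
  set c := ∏ i ∈ Finset.range m, q ^ (1 - t : ℤ) / (α / q ^ i * (q - 1))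
  set x := Ψ (α / q ^ m) (t + 1)
  refine sup_blockSum_le_span hq hα hΨ t m (Submodule.add_mem _ ?lower ?leading)
  case lower =>
    rw [LinearMap.sum_apply]
    refine Submodule.sum_mem _ fun j hj ↦ aeval_Mop_apply_mem_sup_blockSum _
      (Submodule.mem_sup_right (blockSum_mono ?_ (Dq_pow_apply_mem_blockSum hq hq1 hΨα j)))
    simpa using hj
  case leading =>
    set P := aeval (Mop K) (p m)
    have hsplit : P ((Dq K q ^ m) (Ψ α (t + 1))) - (c * (p m).eval (α / q ^ m)) • x =
        P ((Dq K q ^ m) (Ψ α (t + 1)) - c • x) +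
          c • (P x - (p m).eval (α / q ^ m) • x) := by
      rw [map_sub, map_smul, smul_sub, smul_smul]
      abel
    rw [Module.End.mul_apply, hsplit]
    refine Submodule.add_mem _ (aeval_Mop_apply_mem_sup_blockSum _
      (Dq_pow_apply_sub_smul_mem hq hq1 hα hΨ t m)) (Submodule.smul_mem _ _ ?_)
    exact Submodule.mem_sup_left (aeval_apply_sub_eval_smul_mem_genEigenspace _
      ((hΨ _ hβ).mem_genEigenspace hβ (by omega) le_rfl))

/-- for `q ≠ 1` and `P = Σ_{j=0}^m p_j(M) D_q^j` with `p_m ≠ 0`,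
`P Ψ_{α,s} − (q^{m(m−2s+3)/2}/(α^m (q−1)^m)) p_m(α/q^m) Ψ_{α/q^m,s}` lies in the span of
`{Ψ_{α/q^m,r} : 1 ≤ r < s} ∪ {Ψ_{α/q^i,r} : 0 ≤ i < m, 1 ≤ r ≤ s}`. -/
theorem P_Psi_s_q_ne_one (K : Type*) [Field K] (q : K) (hq : q ≠ 0) (hq1 : q ≠ 1)
    (hqi : ∀ n : ℤ, n ≠ 0 → qInt K q n ≠ 0)
    (m : ℕ) (p : ℕ → K[X]) (hpm : p m ≠ 0)
    (α : K) (hα : α ≠ 0) (s : ℕ) (hs : 1 ≤ s)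
    (Ψ : K → ℕ → ℤ → K) (hΨ : ∀ β : K, β ≠ 0 → IsJordanChain K β (Ψ β)) :
    (∑ j ∈ Finset.range (m + 1), aeval (Mop K) (p j) * Dq K q ^ j) (Ψ α s) -
        ((q ^ (((m : ℤ) * ((m : ℤ) - 2 * (s : ℤ) + 3)) / 2) / (α ^ m * (q - 1) ^ m)) *
          (p m).eval (α / q ^ m)) • Ψ (α / q ^ m) s ∈
      Submodule.span K
        ({x : ℤ → K | ∃ r : ℕ, 1 ≤ r ∧ r < s ∧ x = Ψ (α / q ^ m) r} ∪
         {x : ℤ → K | ∃ i r : ℕ, i < m ∧ 1 ≤ r ∧ r ≤ s ∧ x = Ψ (α / q ^ i) r}) :=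
  P_Psi_s_q_ne_one_general K q hq hq1 m p α hα s hs Ψ hΨ
end
end

section
/- If p_0,…,p_m ∈ K[X] are such that Σ_{j=0}^m p_j(M) ∘ D_q^j = 0 as an endomorphism of L, then p_j = 0 for all j = 0,…,m. (Equivalently: {id, D_q, D_q^2, …} is a free basis of the realization of H_K(q) in End_K(L) as a left module over the polynomials in M, so L is a faithful H_K(q)-module and the order of a nonzero element is well defined.) -/
open Polynomial
open scoped Classical

noncomputable section

def delta (K : Type*) [Field K] (s : ℤ) : ℤ → K := fun n => if n = s then 1 else 0

lemma qInt_zero (K : Type*) [Field K] (q : K) : qInt K q 0 = 0 := by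
  simp [qInt]

lemma Dq_delta (K : Type*) [Field K] (q : K) (s : ℤ) :
    Dq K q (delta K s) = qInt K q s • delta K (s - 1) := by
  funext n
  simp only [Dq, delta, LinearMap.coe_mk, AddHom.coe_mk, Pi.smul_apply, smul_eq_mul]
  by_cases hn : n = s - 1
  · subst hn
    have : s - 1 + 1 = s := by ring
    simp [this]
  · have h1 : n + 1 ≠ s := by omega
    simp [h1, hn]

lemma Dq_pow_delta (K : Type*) [Field K] (q : K) (s : ℤ) (j : ℕ) :
    (Dq K q ^ j) (delta K s) =
      (∏ t ∈ Finset.range j, qInt K q (s - t)) • delta K (s - j) := by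
  induction j generalizing s with
  | zero => simp
  | succ j ih =>
    rw [pow_succ, Module.End.mul_apply, Dq_delta, map_smul, ih (s - 1), smul_smul,
      Finset.prod_range_succ']
    have hd : s - 1 - (j : ℤ) = s - ((j + 1 : ℕ) : ℤ) := by push_cast; ring
    have hs : qInt K q s * ∏ t ∈ Finset.range j, qInt K q (s - 1 - (t : ℤ))
        = (∏ k ∈ Finset.range j, qInt K q (s - ((k + 1 : ℕ) : ℤ))) * qInt K q (s - ((0:ℕ) : ℤ)) := by
      rw [mul_comm]
      congr 1
      · exact Finset.prod_congr rfl fun t _ => by congr 1; push_cast; ring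
      · congr 1; push_cast; ring
    rw [hd, hs]

lemma Mop_delta (K : Type*) [Field K] (s : ℤ) :
    Mop K (delta K s) = delta K (s + 1) := by
  funext n
  simp only [Mop, delta, LinearMap.coe_mk, AddHom.coe_mk]
  by_cases hn : n = s + 1
  · simp [hn]
  · have : n - 1 ≠ s := by omega
    simp [this, hn]

lemma Mop_pow_delta (K : Type*) [Field K] (i : ℕ) :
    (Mop K ^ i) (delta K 0) = delta K i := by
  induction i with
  | zero => simp
  | succ i ih =>
    rw [pow_succ', Module.End.mul_apply, ih, Mop_delta]
    norm_cast

lemma aeval_Mop_delta_zero (K : Type*) [Field K] (p : K[X])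
    (hp : aeval (Mop K) p (delta K 0) = 0) : p = 0 := by
  ext k
  rw [Polynomial.aeval_eq_sum_range] at hp
  have := congrFun hp (k : ℤ)
  simp only [LinearMap.coe_sum, Finset.sum_apply, LinearMap.smul_apply, Mop_pow_delta,
    delta, Pi.smul_apply, smul_eq_mul, Pi.zero_apply, Int.natCast_inj] at this
  by_cases hk : k < p.natDegree + 1
  · rw [Finset.sum_eq_single k (fun i _ hi => by simp [Ne.symm hi]) (by simp_all)] at this
    simpa using this
  · exact Polynomial.coeff_eq_zero_of_natDegree_lt (by omega)

/-- faithfulness of the Laurent series module: `{id, D_q, D_q², …}` is a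
free basis of the realization of `H_K(q)` over the polynomials in `M`. -/
theorem faithfulness (K : Type*) [Field K] (q : K) (hq : q ≠ 0)
    (hqi : ∀ n : ℤ, n ≠ 0 → qInt K q n ≠ 0)
    (m : ℕ) (p : ℕ → K[X])
    (h : (∑ j ∈ Finset.range (m + 1), aeval (Mop K) (p j) * Dq K q ^ j) = 0) :
    ∀ j ≤ m, p j = 0 := by
  intro j
  induction j using Nat.strong_induction_on with
  | _ j ih =>
    intro hj
    have h2 : (∑ i ∈ Finset.range (m + 1),
        aeval (Mop K) (p i) * Dq K q ^ i) (delta K j) = 0 := by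
      rw [h]; rfl
    rw [LinearMap.sum_apply] at h2
    have h3 : ∀ i ∈ Finset.range (m + 1), i ≠ j →
        (aeval (Mop K) (p i) * Dq K q ^ i) (delta K j) = 0 := by
      intro i hi hij
      rw [Module.End.mul_apply, Dq_pow_delta]
      rcases lt_or_gt_of_ne hij with hlt | hgt
      · rw [ih i hlt (le_trans (le_of_lt hlt) hj)]
        simp
      · have hz : (∏ t ∈ Finset.range i, qInt K q ((j : ℤ) - t)) = 0 := by
          apply Finset.prod_eq_zero (Finset.mem_range.mpr hgt)
          simp [qInt_zero]
        rw [hz, zero_smul, map_zero]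
    rw [Finset.sum_eq_single j h3 (fun hx => absurd (Finset.mem_range.mpr (by omega)) hx)] at h2
    rw [Module.End.mul_apply, Dq_pow_delta, map_smul] at h2
    have hC : (∏ t ∈ Finset.range j, qInt K q ((j : ℤ) - t)) ≠ 0 := by
      apply Finset.prod_ne_zero_iff.mpr
      intro t ht
      exact hqi _ (by rw [Finset.mem_range] at ht; omega)
    have h4 : aeval (Mop K) (p j) (delta K 0) = 0 := by
      have := smul_eq_zero.mp h2
      rcases this with h5 | h5
      · exact absurd h5 hC
      · simpa using h5
    exact aeval_Mop_delta_zero K (p j) h4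
end
end
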